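/- arXiv:2503.06464 — 3 statements merged into one kernel-verified Lean document; each statement's English description precedes it below -/
import Mathlib

section
/- For every 𝐓 ∈ 𝒯̃_ℵ there exist pairings W₁,…,W_𝙼 of 𝐓 with 𝙼 = exp(ι(log log(ι^{-1}))⁴ℵ) such that: (1) Vert(W_i) ⊂ V(𝐓_ι)∖{root of 𝐓} for all 1 ≤ i ≤ 𝙼; (2) for all i and all descendant trees 𝐓′ of 𝐓 with |V(𝐓′)| ≥ log²(ι^{-1}), |Vert(W_i) ∩ V(𝐓′)| ≤ |V(𝐓′)|/log(ι^{-1}); (3) |Vert(W_i) △ Vert(W_j)| ≥ ιℵ/2 for all i ≠ j; (4) for all i, every pair (u,v) ∈ W_i satisfies (log log(ι^{-1}))^{10} ≤ dist_𝐓(u,v) ≤ 2(log log(ι^{-1}))^{10}, every u,v ∈ Vert(W_i) with (u,v) ∉ W_i satisfy dist_𝐓(u,v) ≥ 10(log log(ι^{-1}))^{10}, and for all i < j and u ∈ Vert(W_i), v ∈ Vert(W_j) with u ≠ v, dist_𝐓(u,v) ≥ (log log(ι^{-1}))^{10}. -/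
/-!
Write `L = log log ι⁻¹`. Greedily choose `m t` sites of `𝐓_ι`, with `t ≈ exp (3 L⁴)`, deeper
than `⌈L¹⁰⌉`, pairwise more than `12 ⌈L¹⁰⌉` apart, and such that every descendant tree `𝐓′`
receives at most `|V(𝐓′)| / (4 log ι⁻¹) + 1` of them: the degree bound makes balls of radius
`O(L¹⁰)` of size `exp (O (L¹¹))`, and the descendant trees that are already full cover few
vertices because descendant trees form a laminar family. Pair each site with its ancestor at
distance `⌈L¹⁰⌉` and arrange these pairs in an `m × t` array. A code of length `m = ιℵ` over an
alphabet of size `t` with minimum distance `> m / 8` and `exp (L⁴ m)` words exists by the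
Gilbert–Varshamov bound; each codeword selects one pair per row. Two codewords differ in more
than `m / 8` rows, each contributing four vertices to the symmetric difference.
-/

open Finset
open scoped Classical
noncomputable section

variable {V : Type*} [Fintype V] [DecidableEq V]

/-- `u` is a (weak) descendant of `v` in the tree `G` rooted at `r`:
`v` lies on the geodesic from the root to `u`. -/
def IsDesc (G : SimpleGraph V) (r v u : V) : Prop :=
  G.dist r u = G.dist r v + G.dist v u

/-- The vertex set of the descendant subtree of `v`. -/
def descFinset (G : SimpleGraph V) (r v : V) : Finset V :=
  Finset.univ.filter (fun u => IsDesc G r v u)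

/-- The descendant subtree of `v`, as an induced subgraph. -/
def descGraph (G : SimpleGraph V) (r v : V) :
    SimpleGraph {u // u ∈ descFinset G r v} :=
  G.induce _

/-- `c` is a child of `p` in the tree `G` rooted at `r`. -/
def IsChild (G : SimpleGraph V) (r p c : V) : Prop :=
  G.Adj p c ∧ G.dist r c = G.dist r p + 1

/-- The children of `p`. -/
def childrenFinset (G : SimpleGraph V) (r p : V) : Finset V :=
  Finset.univ.filter (fun c => IsChild G r p c)

/-- The descendant subtree of `u` is an arm-path (every vertex of it has at most one
child). -/
def IsArm (G : SimpleGraph V) (r u : V) : Prop :=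
  ∀ w, IsDesc G r u w → (childrenFinset G r w).card ≤ 1

/-- The degree of a vertex, as a `Finset` count. -/
def degC (G : SimpleGraph V) (v : V) : ℕ :=
  (Finset.univ.filter (fun w => G.Adj v w)).card

/-- The graph obtained from `G` by attaching, at each vertex `v`, a pendant path
(arm-path) of length `x v` (no attachment when `x v = 0`). -/
def attachGraph (G : SimpleGraph V) (x : V → ℕ) :
    SimpleGraph (V ⊕ (Σ v : V, Fin (x v))) where
  Adj a b :=
    match a, b with
    | Sum.inl a, Sum.inl b => G.Adj a b
    | Sum.inl a, Sum.inr ⟨v, i⟩ => a = v ∧ (i : ℕ) = 0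
    | Sum.inr ⟨v, i⟩, Sum.inl a => a = v ∧ (i : ℕ) = 0
    | Sum.inr ⟨v, i⟩, Sum.inr ⟨w, j⟩ => v = w ∧ ((i : ℕ) + 1 = (j : ℕ) ∨ (j : ℕ) + 1 = (i : ℕ))
  symm := ⟨by
    rintro (a | ⟨v, i⟩) (b | ⟨w, j⟩) h
    · exact G.adj_symm h
    · exact h
    · exact h
    · obtain ⟨rfl, h⟩ := h
      exact ⟨rfl, h.symm⟩⟩
  loopless := ⟨by
    rintro (a | ⟨v, i⟩) h
    · exact G.ne_of_adj h rfl
    · rcases h with ⟨-, h | h⟩ <;> omega⟩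

/-- The `∼` relation on trees ("becoming isomorphic after attaching few arm-paths of
length at most `log²(ι⁻¹)` at non-leaf vertices"); Definition 2.4 of the paper. -/
def SimilarTree (ι : ℝ) {V W : Type*} [Fintype V] [DecidableEq V] [Fintype W] [DecidableEq W]
    (G : SimpleGraph V) (H : SimpleGraph W) : Prop :=
  ∃ x : V → ℕ, ∃ y : W → ℕ,
    ((Finset.univ.filter (fun v => x v ≠ 0)).card : ℝ)
        ≤ (Fintype.card V : ℝ) / Real.log ι⁻¹ ∧
    ((Finset.univ.filter (fun w => y w ≠ 0)).card : ℝ)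
        ≤ (Fintype.card W : ℝ) / Real.log ι⁻¹ ∧
    (∀ v, x v ≠ 0 → degC G v ≠ 1) ∧
    (∀ w, y w ≠ 0 → degC H w ≠ 1) ∧
    (∀ v, (x v : ℝ) ≤ (Real.log ι⁻¹) ^ 2) ∧
    (∀ w, (y w : ℝ) ≤ (Real.log ι⁻¹) ^ 2) ∧
    Nonempty (attachGraph G x ≃g attachGraph H y)

/-- The vertex set of the subtree `𝐓_ι` (vertices whose descendant subtree has at
least `log²(ι⁻¹)` vertices). -/
def iotaFinset (ι : ℝ) (G : SimpleGraph V) (r : V) : Finset V :=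
  Finset.univ.filter (fun v => (Real.log ι⁻¹) ^ 2 ≤ ((descFinset G r v).card : ℝ))

/-- Conditions (1)–(5) of Definition 2.6 of the paper, defining membership of a
rooted tree in the family `𝒯̃_ℵ` of desired rooted trees:
(1) all degrees are at most `log²(ι⁻¹)`; (2) no arm-path of length at least
`log²(ι⁻¹)`; (3) `|V(𝐓_ι)| ≥ ℵ / log⁴(ι⁻¹)`; (4) distinct descendant trees with at
least `log²(ι⁻¹)` vertices sharing the same parent are not `∼`-related;
(5) the root has exactly two children trees of sizes `⌊(ℵ−1)/2⌋` and `⌈(ℵ−1)/2⌉`,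
neither of which is `∼`-related to any descendant tree of the other. -/
def DesiredTree (ι : ℝ) (N : ℕ) (G : SimpleGraph (Fin N)) (r : Fin N) : Prop :=
  G.IsTree ∧
  (∀ v, (degC G v : ℝ) ≤ (Real.log ι⁻¹) ^ 2) ∧
  (∀ u, IsArm G r u → ((descFinset G r u).card : ℝ) - 1 < (Real.log ι⁻¹) ^ 2) ∧
  ((N : ℝ) / (Real.log ι⁻¹) ^ 4 ≤ ((iotaFinset ι G r).card : ℝ)) ∧
  (∀ p u u', IsChild G r p u → IsChild G r p u' → u ≠ u' →
      (Real.log ι⁻¹) ^ 2 ≤ ((descFinset G r u).card : ℝ) →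
      (Real.log ι⁻¹) ^ 2 ≤ ((descFinset G r u').card : ℝ) →
      ¬ SimilarTree ι (descGraph G r u) (descGraph G r u')) ∧
  (∃ u₁ u₂, u₁ ≠ u₂ ∧ childrenFinset G r r = {u₁, u₂} ∧
      (descFinset G r u₁).card = (N - 1) / 2 ∧
      (descFinset G r u₂).card = N - 1 - (N - 1) / 2 ∧
      (∀ w, IsDesc G r u₂ w → ¬ SimilarTree ι (descGraph G r u₁) (descGraph G r w)) ∧
      (∀ w, IsDesc G r u₁ w → ¬ SimilarTree ι (descGraph G r u₂) (descGraph G r w)))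



/-- The set of vertices appearing in an (indexed) pairing. -/
def vertsOf {N m : ℕ} (W : Fin m → Fin N × Fin N) : Finset (Fin N) :=
  Finset.univ.image (fun k => (W k).1) ∪ Finset.univ.image (fun k => (W k).2)

/-- `W` is a pairing: all `2m` endpoint vertices are distinct. -/
def IsPairing {N m : ℕ} (W : Fin m → Fin N × Fin N) : Prop :=
  Function.Injective (fun q : Fin m × Bool => if q.2 then (W q.1).1 else (W q.1).2)

/-- `u` and `v` are paired by `W`. -/
def Paired {N m : ℕ} (W : Fin m → Fin N × Fin N) (u v : Fin N) : Prop :=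
  ∃ k, W k = (u, v) ∨ W k = (v, u)

namespace SimpleGraph

variable {V : Type*} {G : SimpleGraph V}

lemma Connected.exists_dist_eq_of_le_dist (hc : G.Connected) {a b : V} {k : ℕ}
    (hk : k ≤ G.dist a b) : ∃ x, G.dist a x = k ∧ G.dist x b = G.dist a b - k := by
  obtain ⟨p, hp⟩ := hc.exists_walk_length_eq_dist a b
  refine ⟨p.getVert k, ?_, ?_⟩ <;>
  · have h₁ := dist_le (p.take k)
    have h₂ := dist_le (p.drop k)
    have h₃ : G.dist a b ≤ G.dist a (p.getVert k) + G.dist (p.getVert k) b := hc.dist_triangle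
    rw [Walk.take_length] at h₁
    rw [Walk.drop_length] at h₂
    omega

lemma Connected.lt_dist_of_dist_le (hc : G.Connected) {S D : ℕ} {x y u v : V}
    (hu : G.dist x u ≤ D) (hv : G.dist y v ≤ D) (hxy : S + 2 * D < G.dist x y) : S < G.dist u v := by
  have h₁ : G.dist x y ≤ G.dist x u + G.dist u y := hc.dist_triangle
  have h₂ : G.dist u y ≤ G.dist u v + G.dist v y := hc.dist_triangle
  rw [SimpleGraph.dist_comm (u := v)] at h₂
  omega

end SimpleGraph

section RootedTree

variable {V : Type*} {G : SimpleGraph V} {r : V}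

lemma IsDesc.trans (hc : G.Connected) {u v w : V} (h₁ : IsDesc G r u v)
    (h₂ : IsDesc G r v w) : IsDesc G r u w := by
  have t₁ : G.dist u w ≤ G.dist u v + G.dist v w := hc.dist_triangle
  have t₂ : G.dist r w ≤ G.dist r u + G.dist u w := hc.dist_triangle
  unfold IsDesc at *
  omega

/-- The geodesic from the root to `w` is unique in a tree. -/
lemma IsDesc.eq_of_dist_eq (ht : G.IsTree) {a b w : V} (ha : IsDesc G r a w)
    (hb : IsDesc G r b w) (hab : G.dist r a = G.dist r b) : a = b := by
  have hc := ht.connected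
  obtain ⟨pa, hpa⟩ := hc.exists_walk_length_eq_dist r a
  obtain ⟨qa, hqa⟩ := hc.exists_walk_length_eq_dist a w
  obtain ⟨pb, hpb⟩ := hc.exists_walk_length_eq_dist r b
  obtain ⟨qb, hqb⟩ := hc.exists_walk_length_eq_dist b w
  have hpath : ∀ {x} (p : G.Walk r x) (q : G.Walk x w), p.length + q.length = G.dist r w →
      (p.append q).IsPath := fun p q h =>
    (p.append q).isPath_of_length_eq_dist (by rw [SimpleGraph.Walk.length_append, h])
  have heq : pa.append qa = pb.append qb := congrArg Subtype.val
    ((ht.isAcyclic.subsingleton_path r w).elim ⟨_, hpath pa qa (by unfold IsDesc at ha; omega)⟩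
      ⟨_, hpath pb qb (by unfold IsDesc at hb; omega)⟩)
  have hmem : a ∈ (pb.append qb).support :=
    heq ▸ (pa.mem_support_append_iff qa).mpr (Or.inr qa.start_mem_support)
  unfold IsDesc at ha hb
  rcases (pb.mem_support_append_iff qb).mp hmem with hm | hm
  · have h₁ := congrArg SimpleGraph.Walk.length (pb.take_spec hm)
    have h₂ := SimpleGraph.dist_le (pb.takeUntil a hm)
    have h₃ := SimpleGraph.dist_le (pb.dropUntil a hm)
    rw [SimpleGraph.Walk.length_append] at h₁
    exact hc.dist_eq_zero_iff.mp (by omega)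
  · have h₁ := congrArg SimpleGraph.Walk.length (qb.take_spec hm)
    have h₂ := SimpleGraph.dist_le (qb.takeUntil a hm)
    have h₃ := SimpleGraph.dist_le (qb.dropUntil a hm)
    rw [SimpleGraph.Walk.length_append] at h₁
    exact (hc.dist_eq_zero_iff.mp (by omega)).symm

lemma IsDesc.of_isDesc_of_dist_le (ht : G.IsTree) {u v w : V} (hu : IsDesc G r u w)
    (hv : IsDesc G r v w) (hle : G.dist r u ≤ G.dist r v) : IsDesc G r u v := by
  have hc := ht.connected
  obtain ⟨u', h₁, h₂⟩ := hc.exists_dist_eq_of_le_dist hle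
  have t₁ : G.dist u' w ≤ G.dist u' v + G.dist v w := hc.dist_triangle
  have t₂ : G.dist r w ≤ G.dist r u' + G.dist u' w := hc.dist_triangle
  unfold IsDesc at hu hv
  have hu' : IsDesc G r u' w := by unfold IsDesc; omega
  obtain rfl : u' = u := hu'.eq_of_dist_eq ht (by unfold IsDesc; omega) (by omega)
  unfold IsDesc
  omega

lemma mem_descFinset [Fintype V] {v u : V} : u ∈ descFinset G r v ↔ IsDesc G r v u := by
  simp [descFinset]

lemma descFinset_subset [Fintype V] (hc : G.Connected) {u v : V} (h : IsDesc G r u v) :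
    descFinset G r v ⊆ descFinset G r u := fun _ hw =>
  mem_descFinset.mpr (h.trans hc (mem_descFinset.mp hw))

lemma descFinset_subset_or_subset_or_disjoint [Fintype V] (ht : G.IsTree) (u v : V) :
    descFinset G r u ⊆ descFinset G r v ∨ descFinset G r v ⊆ descFinset G r u ∨
      Disjoint (descFinset G r u) (descFinset G r v) := by
  refine or_iff_not_imp_right.mpr fun h => ?_
  obtain ⟨w, hwu, hwv⟩ := Finset.not_disjoint_iff.mp (not_or.mp h).2
  rw [mem_descFinset] at hwu hwv
  rcases le_total (G.dist r u) (G.dist r v) with hle | hle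
  · exact absurd (descFinset_subset ht.connected (hwu.of_isDesc_of_dist_le ht hwv hle))
      (not_or.mp h).1
  · exact descFinset_subset ht.connected (hwv.of_isDesc_of_dist_le ht hwu hle)

lemma exists_isDesc_dist_eq (hc : G.Connected) {z : V} {D : ℕ} (hD : D ≤ G.dist r z) :
    ∃ x, IsDesc G r x z ∧ G.dist x z = D := by
  obtain ⟨x, h₁, h₂⟩ := hc.exists_dist_eq_of_le_dist (Nat.sub_le (G.dist r z) D)
  exact ⟨x, by unfold IsDesc; omega, by omega⟩

end RootedTree

section Balls

variable {V : Type*} [Fintype V] (G : SimpleGraph V)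

def distBall (v : V) (R : ℕ) : Finset V :=
  univ.filter (fun w => G.dist v w ≤ R)

variable {G}

lemma card_distBall_le [DecidableEq V] (hc : G.Connected) {Δ : ℕ} (hdeg : ∀ x, degC G x ≤ Δ)
    (v : V) (R : ℕ) : (distBall G v R).card ≤ (Δ + 1) ^ R := by
  induction R with
  | zero =>
    refine (card_le_one.mpr fun a ha b hb => ?_).trans (by simp)
    simp only [distBall, mem_filter, mem_univ, true_and, nonpos_iff_eq_zero,
      hc.dist_eq_zero_iff] at ha hb
    rw [← ha, ← hb]
  | succ R ih =>
    have hsub : distBall G v (R + 1) ⊆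
        (distBall G v R).biUnion (fun u => insert u (univ.filter (G.Adj u))) := by
      intro w hw
      simp only [distBall, mem_filter, mem_univ, true_and] at hw
      rcases Nat.lt_or_ge R (G.dist v w) with hlt | hle
      · obtain ⟨u, hu, huw⟩ := hc.exists_dist_eq_of_le_dist hlt.le
        refine mem_biUnion.mpr ⟨u, by simp [distBall, hu], mem_insert_of_mem ?_⟩
        simpa [← SimpleGraph.dist_eq_one_iff_adj] using (by omega : G.dist u w = 1)
      · exact mem_biUnion.mpr ⟨w, by simp [distBall, hle], mem_insert_self _ _⟩
    calc (distBall G v (R + 1)).card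
        ≤ ∑ u ∈ distBall G v R, (insert u (univ.filter (G.Adj u))).card :=
          (card_le_card hsub).trans card_biUnion_le
      _ ≤ ∑ _u ∈ distBall G v R, (Δ + 1) :=
          sum_le_sum fun u _ => (card_insert_le _ _).trans (Nat.add_le_add_right (hdeg u) 1)
      _ ≤ (Δ + 1) ^ (R + 1) := by
          rw [sum_const, smul_eq_mul, pow_succ]
          exact Nat.mul_le_mul_right _ ih

lemma card_distBall_le_pow [DecidableEq V] (hc : G.Connected) {x : ℝ} (hx : 2 ≤ x)
    (hdeg : ∀ v, (degC G v : ℝ) ≤ x ^ 2) (a : V) (R : ℕ) :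
    ((distBall G a R).card : ℝ) ≤ x ^ (3 * R) := by
  have h := card_distBall_le hc (Δ := ⌊x ^ 2⌋₊) (fun v => Nat.le_floor (hdeg v)) a R
  calc ((distBall G a R).card : ℝ) ≤ ((⌊x ^ 2⌋₊ : ℝ) + 1) ^ R := by exact_mod_cast h
    _ ≤ (x ^ 3) ^ R := by
        gcongr
        nlinarith [Nat.floor_le (by positivity : 0 ≤ x ^ 2)]
    _ = x ^ (3 * R) := by rw [pow_mul]

lemma card_le_card_filter_lt_dist_add (s : Finset V) (v : V) (R : ℕ) :
    s.card ≤ (s.filter (R < G.dist v ·)).card + (distBall G v R).card := by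
  refine (card_le_card fun w hw => ?_).trans (card_union_le _ _)
  by_cases h : R < G.dist v w
  · exact mem_union_left _ (mem_filter.mpr ⟨hw, h⟩)
  · exact mem_union_right _ (by simpa [distBall] using h)

end Balls

/-- Peel off a largest member; the members not contained in it are disjoint from it. -/
theorem card_biUnion_le_of_laminar {ι α : Type*} [DecidableEq α] (s : Finset ι)
    (f : ι → Finset α) (hf : ∀ i ∈ s, ∀ j ∈ s, f i ⊆ f j ∨ f j ⊆ f i ∨ Disjoint (f i) (f j))
    (T : Finset α) {B : ℝ} (hB : 0 ≤ B) (hT : ∀ i ∈ s, ((f i).card : ℝ) ≤ B * (T ∩ f i).card) :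
    ((s.biUnion f).card : ℝ) ≤ B * T.card := by
  induction s using Finset.strongInduction generalizing T with
  | H s ih =>
  rcases s.eq_empty_or_nonempty with rfl | hs
  · simpa using mul_nonneg hB (Nat.cast_nonneg _)
  obtain ⟨i, hi, hmax⟩ := s.exists_max_image (fun i => (f i).card) hs
  set s' := s.filter (fun j => ¬ f j ⊆ f i)
  have hs' : s' ⊂ s := filter_ssubset.mpr ⟨i, hi, by simp⟩
  have hdisj : ∀ j ∈ s', Disjoint (f i) (f j) := by
    intro j hj
    obtain ⟨hj, hji⟩ := mem_filter.mp hj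
    rcases hf i hi j hj with hij | hji' | hd
    · exact absurd (eq_of_subset_of_card_le hij (hmax j hj)).ge hji
    · exact absurd hji' hji
    · exact hd
  have hcover : s.biUnion f ⊆ f i ∪ s'.biUnion f := by
    intro x hx
    obtain ⟨j, hj, hxj⟩ := mem_biUnion.mp hx
    by_cases hji : f j ⊆ f i
    · exact mem_union_left _ (hji hxj)
    · exact mem_union_right _ (mem_biUnion.mpr ⟨j, mem_filter.mpr ⟨hj, hji⟩, hxj⟩)
  have hrest := ih s' hs' (fun j hj k hk => hf j (hs'.subset hj) k (hs'.subset hk))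
    (T \ f i) fun j hj => by
      rw [sdiff_inter_right_comm, ((hdisj j hj).symm.mono_left inter_subset_right).sdiff_eq_left]
      exact hT j (hs'.subset hj)
  have hsplit : ((T ∩ f i).card : ℝ) + (T \ f i).card = T.card := by
    exact_mod_cast card_inter_add_card_sdiff T (f i)
  calc ((s.biUnion f).card : ℝ) ≤ (f i).card + (s'.biUnion f).card := by
        exact_mod_cast (card_le_card hcover).trans (card_union_le _ _)
    _ ≤ B * (T ∩ f i).card + B * (T \ f i).card := add_le_add (hT i hi) hrest
    _ = B * T.card := by rw [← mul_add, hsplit]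

section Greedy

variable {V : Type*} [Fintype V] [DecidableEq V] {G : SimpleGraph V} {r : V}

/-- The vertices to avoid are the `S`-balls around `T` and the subtrees that already contain
more than a `1/B` fraction of points of `T`; the latter cover at most `B |T|` vertices by
laminarity. -/
lemma exists_far_vertex (ht : G.IsTree) (Z T : Finset V) (S : ℕ) {B K : ℝ} (hB : 0 < B)
    (hball : ∀ a, ((distBall G a S).card : ℝ) ≤ K) (hZ : T.card * (K + B) < Z.card) :
    ∃ z ∈ Z, (∀ a ∈ T, S < G.dist a z) ∧
      ∀ v, z ∈ descFinset G r v →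
        B * (T ∩ descFinset G r v).card ≤ (descFinset G r v).card := by
  set F := univ.filter fun v =>
    ((descFinset G r v).card : ℝ) < B * (T ∩ descFinset G r v).card
  have hF : ((F.biUnion (descFinset G r)).card : ℝ) ≤ B * T.card :=
    card_biUnion_le_of_laminar F _
      (fun u _ v _ => descFinset_subset_or_subset_or_disjoint ht u v) T hB.le
      fun v hv => (mem_filter.mp hv).2.le
  have hT : ((T.biUnion (distBall G · S)).card : ℝ) ≤ T.card * K :=
    calc ((T.biUnion (distBall G · S)).card : ℝ) ≤ ∑ a ∈ T, ((distBall G a S).card : ℝ) := by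
          exact_mod_cast card_biUnion_le
      _ ≤ T.card * K := by simpa using sum_le_sum fun a (_ : a ∈ T) => hball a
  have hbad : ((T.biUnion (distBall G · S) ∪ F.biUnion (descFinset G r)).card : ℝ) < Z.card :=
    calc _ ≤ ((T.biUnion (distBall G · S)).card : ℝ) + (F.biUnion (descFinset G r)).card := by
          exact_mod_cast card_union_le _ _
      _ < Z.card := by linarith
  obtain ⟨z, hzZ, hz⟩ := exists_mem_notMem_of_card_lt_card (by exact_mod_cast hbad)
  simp only [mem_union, mem_biUnion, not_or, not_exists, not_and] at hz
  refine ⟨z, hzZ, fun a ha => ?_, fun v hv => ?_⟩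
  · simpa [distBall] using hz.1 a ha
  · simpa [F] using fun hv' => hz.2 v hv' hv

theorem exists_separated_subset (ht : G.IsTree) (Z : Finset V) (S : ℕ) {B K : ℝ}
    (hB : 0 < B) (hK : 0 ≤ K) (hball : ∀ a, ((distBall G a S).card : ℝ) ≤ K) (n : ℕ)
    (hn : n * (K + B) < Z.card) :
    ∃ T ⊆ Z, T.card = n ∧ (∀ a ∈ T, ∀ b ∈ T, a ≠ b → S < G.dist a b) ∧
      ∀ v, ((T ∩ descFinset G r v).card : ℝ) ≤ (descFinset G r v).card / B + 1 := by
  induction n with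
  | zero => exact ⟨∅, empty_subset _, rfl, by simp, fun v => by simp; positivity⟩
  | succ n ih =>
    obtain ⟨T, hTZ, rfl, hsep, hdense⟩ := ih (by push_cast at hn; nlinarith)
    obtain ⟨z, hzZ, hzfar, hzdense⟩ := exists_far_vertex (r := r) ht Z T S hB hball
      (by push_cast at hn; nlinarith)
    have hzT : z ∉ T := fun hz => by simpa using hzfar z hz
    refine ⟨insert z T, insert_subset hzZ hTZ, card_insert_of_notMem hzT, ?_, fun v => ?_⟩
    · simp only [mem_insert]
      rintro a (rfl | ha) b (rfl | hb) hab
      · exact absurd rfl hab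
      · exact SimpleGraph.dist_comm (G := G) ▸ hzfar b hb
      · exact hzfar a ha
      · exact hsep a ha b hb hab
    by_cases hzv : z ∈ descFinset G r v
    · rw [insert_inter_of_mem hzv, card_insert_of_notMem (fun h => hzT (mem_inter.mp h).1)]
      push_cast
      gcongr
      exact (le_div_iff₀' hB).mpr (hzdense v hzv)
    · rw [insert_inter_of_notMem hzv]
      exact hdense v

end Greedy

section Pieces

def pairEnds {α : Type*} [DecidableEq α] (x : α × α) : Finset α := {x.1, x.2}

lemma mem_pairEnds {α : Type*} [DecidableEq α] {x : α × α} {v : α} :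
    v ∈ pairEnds x ↔ v = x.1 ∨ v = x.2 := by
  simp [pairEnds]

def Separated {V κ : Type*} [DecidableEq V] (G : SimpleGraph V) (S : ℕ) (P : κ → V × V) : Prop :=
  ∀ p q, p ≠ q → ∀ u ∈ pairEnds (P p), ∀ v ∈ pairEnds (P q), S < G.dist u v

lemma Separated.ne {V κ : Type*} [DecidableEq V] {G : SimpleGraph V} {S : ℕ} {P : κ → V × V}
    (hsep : Separated G S P) {p q : κ} (hpq : p ≠ q) {u v : V} (hu : u ∈ pairEnds (P p))
    (hv : v ∈ pairEnds (P q)) : u ≠ v := by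
  rintro rfl
  simpa using hsep p q hpq u hu u hv


variable {V : Type*} [Fintype V] [DecidableEq V] {G : SimpleGraph V} {r : V}

/-- Greedily pick `|κ|` sites of `Z` at pairwise distance `> 12 D`, spread out over the subtrees,
and pair each site with its ancestor at distance `D`. -/
theorem exists_separated_pieces (ht : G.IsTree) (Z : Finset V) {D : ℕ}
    (hZ : ∀ z ∈ Z, D < G.dist r z) {B K : ℝ} (hB : 0 < B) (hK : 0 ≤ K)
    (hball : ∀ a, ((distBall G a (12 * D)).card : ℝ) ≤ K) (κ : Type*) [Fintype κ]
    (hκ : Fintype.card κ * (K + B) < Z.card) :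
    ∃ P : κ → V × V, Separated G (10 * D) P ∧
      (∀ p, (P p).2 ∈ Z ∧ IsDesc G r (P p).1 (P p).2 ∧ G.dist (P p).1 (P p).2 = D) ∧
      ∀ v, ((univ.filter fun p => (P p).2 ∈ descFinset G r v).card : ℝ)
        ≤ (descFinset G r v).card / B + 1 := by
  obtain ⟨T, hTZ, hTcard, hTsep, hTdense⟩ :=
    exists_separated_subset (r := r) ht Z (12 * D) hB hK hball _ hκ
  let e : κ ≃ T := (Fintype.equivFin κ).trans (T.equivFinOfCardEq hTcard).symm
  have hanc : ∀ z, ∃ x, D < G.dist r z → IsDesc G r x z ∧ G.dist x z = D := fun z => by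
    by_cases hz : D < G.dist r z
    · obtain ⟨x, hx, hxz⟩ := exists_isDesc_dist_eq ht.connected hz.le
      exact ⟨x, fun _ => ⟨hx, hxz⟩⟩
    · exact ⟨z, fun h => absurd h hz⟩
  choose a ha using hanc
  have hP : ∀ p, (e p : V) ∈ Z ∧ IsDesc G r (a (e p)) (e p) ∧ G.dist (a (e p)) (e p) = D :=
    fun p => ⟨hTZ (e p).2, ha _ (hZ _ (hTZ (e p).2))⟩
  refine ⟨fun p => (a (e p), e p), fun p q hpq u hu v hv => ?_, hP, fun v => ?_⟩
  · have hend : ∀ p, ∀ w ∈ pairEnds (a (e p), (e p : V)), G.dist (e p) w ≤ D := by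
      intro p w hw
      rcases mem_pairEnds.mp hw with rfl | rfl
      · rw [SimpleGraph.dist_comm, (hP p).2.2]
      · simp
    refine ht.connected.lt_dist_of_dist_le (hend p u hu) (hend q v hv) ?_
    have := hTsep _ (e p).2 _ (e q).2 (fun h => hpq (e.injective (Subtype.ext h)))
    omega
  · refine le_trans ?_ (hTdense v)
    exact_mod_cast card_le_card_of_injOn (fun p => (e p : V))
      (fun p hp => mem_inter.mpr ⟨(e p).2, (mem_filter.mp hp).2⟩)
      (fun p _ q _ h => e.injective (Subtype.ext h))

end Pieces

section Codes

variable {ι β : Type*} [Fintype ι] [DecidableEq ι] [Fintype β] [DecidableEq β]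

/-- A word within distance `d` of `c` is fixed by the set of at most `d` coordinates where it
differs from `c` and by its values there. -/
lemma card_hammingBall_le [Nonempty β] (c : ι → β) (d : ℕ) :
    (univ.filter fun y : ι → β => hammingDist y c ≤ d).card
      ≤ 2 ^ Fintype.card ι * Fintype.card β ^ d := by
  set P := (univ : Finset ι).powerset.filter fun S => S.card ≤ d
  have hsub : (univ.filter fun y : ι → β => hammingDist y c ≤ d) ⊆
      P.biUnion fun S => univ.filter fun y : ι → β => ∀ i ∉ S, y i = c i := by
    intro y hy
    refine mem_biUnion.mpr ⟨univ.filter fun i => y i ≠ c i, ?_, ?_⟩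
    · simpa [P, hammingDist] using (mem_filter.mp hy).2
    · simp
  have hfix : ∀ S ∈ P, (univ.filter fun y : ι → β => ∀ i ∉ S, y i = c i).card
      ≤ Fintype.card β ^ d := by
    intro S hS
    calc _ ≤ (univ : Finset (S → β)).card := by
          refine card_le_card_of_injOn (fun y i => y i) (fun _ _ => mem_univ _) ?_
          intro y₁ h₁ y₂ h₂ heq
          simp only [coe_filter, mem_univ, true_and, Set.mem_ofPred_eq] at h₁ h₂
          funext i
          by_cases hi : i ∈ S
          · exact congrFun heq ⟨i, hi⟩
          · rw [h₁ i hi, h₂ i hi]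
      _ = Fintype.card β ^ S.card := by simp
      _ ≤ Fintype.card β ^ d := Nat.pow_le_pow_right Fintype.card_pos (mem_filter.mp hS).2
  calc _ ≤ ∑ S ∈ P, (univ.filter fun y : ι → β => ∀ i ∉ S, y i = c i).card :=
        (card_le_card hsub).trans card_biUnion_le
    _ ≤ P.card * Fintype.card β ^ d := by simpa using sum_le_sum hfix
    _ ≤ 2 ^ Fintype.card ι * Fintype.card β ^ d := by
        gcongr
        exact (card_filter_le _ _).trans (by simp)

/-- Gilbert–Varshamov: a maximal code of minimum distance `> d` covers the whole space by its
Hamming balls of radius `d`. -/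
theorem exists_code_hammingDist_gt [Nonempty β] {d M : ℕ}
    (hM : M * (2 ^ Fintype.card ι * Fintype.card β ^ d) ≤ Fintype.card β ^ Fintype.card ι) :
    ∃ cw : Fin M → ι → β, ∀ i j, i ≠ j → d < hammingDist (cw i) (cw j) := by
  set codes := (univ : Finset (Finset (ι → β))).filter
    fun C => ∀ x ∈ C, ∀ y ∈ C, x ≠ y → d < hammingDist x y
  obtain ⟨C, hC, hmax⟩ := codes.exists_max_image card ⟨∅, by simp [codes]⟩
  simp only [codes, mem_filter, mem_univ, true_and] at hC
  have hcover : ∀ x : ι → β, ∃ c ∈ C, hammingDist x c ≤ d := by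
    by_contra! hfar
    obtain ⟨x, hx⟩ := hfar
    have hxC : x ∉ C := fun h => by simpa using hx x h
    have hins : insert x C ∈ codes := by
      simp only [codes, mem_filter, mem_univ, true_and, mem_insert]
      rintro a (rfl | ha) b (rfl | hb) hab
      · exact absurd rfl hab
      · exact hx b hb
      · exact hammingDist_comm a b ▸ hx a ha
      · exact hC a ha b hb hab
    simpa [card_insert_of_notMem hxC] using hmax _ hins
  have hcount : Fintype.card β ^ Fintype.card ι
      ≤ C.card * (2 ^ Fintype.card ι * Fintype.card β ^ d) := by
    calc Fintype.card β ^ Fintype.card ι = (univ : Finset (ι → β)).card := by simp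
      _ ≤ ∑ c ∈ C, (univ.filter fun y : ι → β => hammingDist y c ≤ d).card := by
          refine (card_le_card fun x _ => ?_).trans card_biUnion_le
          obtain ⟨c, hc, hxc⟩ := hcover x
          exact mem_biUnion.mpr ⟨c, hc, by simpa using hxc⟩
      _ ≤ C.card * (2 ^ Fintype.card ι * Fintype.card β ^ d) := by
          simpa using sum_le_sum fun c (_ : c ∈ C) => card_hammingBall_le c d
  have hMC : M ≤ C.card := Nat.le_of_mul_le_mul_right (hM.trans hcount) (by positivity)
  let e : Fin M ↪ C := (Fin.castLEEmb hMC).trans C.equivFin.symm.toEmbedding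
  exact ⟨fun i => e i, fun i j hij => hC _ (e i).2 _ (e j).2
    fun h => hij (e.injective (Subtype.ext h))⟩

end Codes

section Pairings

variable {N m : ℕ} {β : Type*}

lemma mem_vertsOf {W : Fin m → Fin N × Fin N} {v : Fin N} :
    v ∈ vertsOf W ↔ ∃ k, v ∈ pairEnds (W k) := by
  simp only [vertsOf, mem_union, mem_image, mem_univ, true_and, mem_pairEnds]
  grind

def pairingOfCode (P : Fin m × β → Fin N × Fin N) (c : Fin m → β) : Fin m → Fin N × Fin N :=
  fun k => P (k, c k)

variable {G : SimpleGraph (Fin N)} {S : ℕ} {P : Fin m × β → Fin N × Fin N}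

lemma isPairing_pairingOfCode (hsep : Separated G S P) (hne : ∀ p, (P p).1 ≠ (P p).2)
    (c : Fin m → β) : IsPairing (pairingOfCode P c) := by
  rintro ⟨k, b⟩ ⟨k', b'⟩ h
  simp only [pairingOfCode] at h
  by_cases hk : k = k'
  · subst hk
    cases b <;> cases b' <;> simp_all [eq_comm]
  · refine absurd h (hsep.ne (p := (k, c k)) (q := (k', c k'))
      (fun h => hk (congrArg Prod.fst h)) ?_ ?_) <;>
      split <;> simp [mem_pairEnds]

lemma lt_dist_of_not_paired (hsep : Separated G S P) {c : Fin m → β} {u v : Fin N}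
    (hu : u ∈ vertsOf (pairingOfCode P c)) (hv : v ∈ vertsOf (pairingOfCode P c))
    (huv : u ≠ v) (hnp : ¬ Paired (pairingOfCode P c) u v) : S < G.dist u v := by
  obtain ⟨k, hk⟩ := mem_vertsOf.mp hu
  obtain ⟨k', hk'⟩ := mem_vertsOf.mp hv
  by_cases h : k = k'
  · subst h
    refine absurd ⟨k, ?_⟩ hnp
    rw [mem_pairEnds] at hk hk'
    rcases hk with rfl | rfl <;> rcases hk' with rfl | rfl <;> simp_all
  · exact hsep _ _ (fun h' => h (congrArg Prod.fst h')) u hk v hk'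

lemma le_dist_of_mem_vertsOf (hsep : Separated G S P) {D : ℕ}
    (hD : ∀ p, D ≤ G.dist (P p).1 (P p).2) (hDS : D ≤ S) {c c' : Fin m → β} {u v : Fin N}
    (hu : u ∈ vertsOf (pairingOfCode P c)) (hv : v ∈ vertsOf (pairingOfCode P c'))
    (huv : u ≠ v) : D ≤ G.dist u v := by
  obtain ⟨k, hk⟩ := mem_vertsOf.mp hu
  obtain ⟨k', hk'⟩ := mem_vertsOf.mp hv
  simp only [pairingOfCode] at hk hk'
  by_cases h : (k, c k) = (k', c' k')
  · rw [← h, mem_pairEnds] at hk'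
    rw [mem_pairEnds] at hk
    have := hD (k, c k)
    rcases hk with rfl | rfl <;> rcases hk' with rfl | rfl <;>
      simp_all [SimpleGraph.dist_comm]
  · exact hDS.trans (hsep _ _ h u hk v hk').le

lemma card_vertsOf_inter_le [Fintype β] {U : Finset (Fin N)}
    (hU : ∀ p, (P p).1 ∈ U → (P p).2 ∈ U) (c : Fin m → β) :
    (vertsOf (pairingOfCode P c) ∩ U).card ≤ 2 * (univ.filter fun p => (P p).2 ∈ U).card := by
  set K := univ.filter fun k => (P (k, c k)).2 ∈ U
  have hsub : vertsOf (pairingOfCode P c) ∩ U ⊆ K.biUnion fun k => pairEnds (P (k, c k)) := by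
    intro v hv
    obtain ⟨hv, hvU⟩ := mem_inter.mp hv
    obtain ⟨k, hk⟩ := mem_vertsOf.mp hv
    refine mem_biUnion.mpr ⟨k, mem_filter.mpr ⟨mem_univ _, ?_⟩, hk⟩
    rcases mem_pairEnds.mp hk with rfl | rfl
    exacts [hU _ hvU, hvU]
  calc _ ≤ ∑ k ∈ K, (pairEnds (P (k, c k))).card := (card_le_card hsub).trans card_biUnion_le
    _ ≤ ∑ _k ∈ K, 2 := sum_le_sum fun k _ => card_le_two
    _ = 2 * K.card := by rw [sum_const, smul_eq_mul, mul_comm]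
    _ ≤ 2 * (univ.filter fun p => (P p).2 ∈ U).card := by
        refine Nat.mul_le_mul_left 2 (card_le_card_of_injOn (fun k => (k, c k)) ?_ ?_)
        · intro k hk
          simpa [K] using hk
        · intro k _ k' _ h
          exact congrArg Prod.fst h

variable [DecidableEq β]

lemma two_mul_hammingDist_le_card_sdiff (hsep : Separated G S P)
    (hne : ∀ p, (P p).1 ≠ (P p).2) (c c' : Fin m → β) :
    2 * hammingDist c c' ≤ (vertsOf (pairingOfCode P c) \ vertsOf (pairingOfCode P c')).card := by
  set K := univ.filter fun k => c k ≠ c' k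
  have hsub : K.biUnion (fun k => pairEnds (P (k, c k))) ⊆
      vertsOf (pairingOfCode P c) \ vertsOf (pairingOfCode P c') := by
    intro v hv
    obtain ⟨k, hk, hvk⟩ := mem_biUnion.mp hv
    refine mem_sdiff.mpr ⟨mem_vertsOf.mpr ⟨k, hvk⟩, fun hv' => ?_⟩
    obtain ⟨k', hk'⟩ := mem_vertsOf.mp hv'
    refine hsep.ne (fun h => ?_) hvk hk' rfl
    obtain ⟨rfl, h⟩ := Prod.mk.inj h
    exact (mem_filter.mp hk).2 h
  have hdisj : (K : Set (Fin m)).PairwiseDisjoint (fun k => pairEnds (P (k, c k))) :=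
    fun k _ k' _ hkk' => disjoint_left.mpr fun v hv hv' =>
      hsep.ne (fun h => hkk' (congrArg Prod.fst h)) hv hv' rfl
  calc 2 * hammingDist c c' = ∑ k ∈ K, (pairEnds (P (k, c k))).card := by
        simp [pairEnds, card_pair (hne _), hammingDist, K, mul_comm]
    _ = (K.biUnion fun k => pairEnds (P (k, c k))).card := (card_biUnion hdisj).symm
    _ ≤ _ := card_le_card hsub

lemma four_mul_hammingDist_le_card_symmDiff (hsep : Separated G S P)
    (hne : ∀ p, (P p).1 ≠ (P p).2) (c c' : Fin m → β) :
    4 * hammingDist c c' ≤ ((vertsOf (pairingOfCode P c) \ vertsOf (pairingOfCode P c')) ∪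
      (vertsOf (pairingOfCode P c') \ vertsOf (pairingOfCode P c))).card := by
  rw [card_union_of_disjoint disjoint_sdiff_sdiff]
  have h₁ := two_mul_hammingDist_le_card_sdiff hsep hne c c'
  have h₂ := two_mul_hammingDist_le_card_sdiff hsep hne c' c
  rw [hammingDist_comm] at h₂
  omega

end Pairings

section Numerics

open Real

/-- `log` is even, so `c < log y` alone does not force `y > 0`; the bound `-2 < y` does, because
`log |y| < 1` for `|y| < 2`. -/
lemma exp_lt_of_lt_log {y c : ℝ} (hy : -2 < y) (hc : 1 ≤ c) (h : c < log y) : exp c < y := by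
  rcases lt_or_ge 0 y with hpos | hle
  · exact (lt_log_iff_exp_lt hpos).mp h
  · rcases hle.lt_or_eq with hneg | rfl
    · have := log_le_sub_one_of_pos (neg_pos.mpr hneg)
      rw [log_neg_eq_log] at this
      linarith
    · simp at h
      linarith

lemma ten_pow_le_log_of_lt_log_log_log {x : ℝ} (hx : 2 ≤ x ^ 2)
    (h : 100 < log (log (log x))) : 10 ^ 17 ≤ log x := by
  have hlogx : 0.69 / 2 < log x := by
    have h2 : log 2 ≤ 2 * log x := by simpa [log_pow] using log_le_log two_pos hx
    linarith [log_two_gt_d9]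
  have hexp2 : exp (-2) < log x := by
    have h3 : 3 ≤ exp 2 := by linarith [add_one_le_exp 2]
    have : exp (-2) ≤ 1 / 3 := by
      rw [exp_neg, one_div]
      exact inv_anti₀ (by norm_num) h3
    linarith
  have h₁ : exp 100 < log (log x) :=
    exp_lt_of_lt_log ((lt_log_iff_exp_lt (by linarith)).mpr hexp2) (by norm_num) h
  have h₂ : exp (exp 100) < log x :=
    exp_lt_of_lt_log (by linarith) (by linarith [add_one_le_exp 100]) h₁
  have h₃ : (10 : ℝ) ^ 17 ≤ exp 100 :=
    calc (10 : ℝ) ^ 17 ≤ 2 ^ 100 := by norm_num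
      _ ≤ exp 1 ^ 100 := by gcongr; linarith [add_one_le_exp 1]
      _ = exp 100 := by rw [← exp_nat_mul]; norm_num
  linarith [add_one_le_exp (exp 100)]

lemma mul_pow_lt_exp {x : ℝ} (hx : 10 ^ 17 ≤ x) : 81 * x ^ 11 < exp x := by
  have h := pow_div_factorial_le_exp x (by linarith) 12
  have hf : ((Nat.factorial 12 : ℕ) : ℝ) = 479001600 := by norm_num [Nat.factorial]
  rw [hf, div_le_iff₀ (by norm_num)] at h
  have hx11 : 0 < x ^ 11 := by positivity
  nlinarith

lemma ceil_exp_le {y : ℝ} (hy : 1 ≤ y) : (⌈exp (3 * y)⌉₊ : ℝ) ≤ exp (4 * y) := by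
  have h1 : 1 ≤ exp (3 * y) := one_le_exp (by linarith)
  have h2 : 2 ≤ exp y := by linarith [add_one_le_exp y]
  calc (⌈exp (3 * y)⌉₊ : ℝ) ≤ 2 * exp (3 * y) := Nat.ceil_le_two_mul (by linarith)
    _ ≤ exp y * exp (3 * y) := by gcongr
    _ = exp (4 * y) := by rw [← exp_add]; ring_nf

/-- The greedy choice of `m t` sites in a tree with `m exp (exp L)` vertices and degrees
`≤ exp (2 L)` is affordable: every cost is `exp (O (L ^ 11))`, far below `exp (exp L)`. -/
lemma greedy_budget {L : ℝ} (hL : 10 ^ 17 ≤ L) {D m t : ℕ} (hD₁ : 1 ≤ D)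
    (hD : (D : ℝ) ≤ 2 * L ^ 10) (ht : (t : ℝ) ≤ exp (4 * L ^ 4)) (hm : 1 ≤ m) :
    m * t * (exp L ^ (36 * D) + 4 * exp L) + exp L ^ (3 * D)
      < m * exp (exp L) / exp L ^ 4 := by
  have hL1 : 1 ≤ L := by linarith
  have h4 : (4 : ℝ) ≤ exp L := by linarith [add_one_le_exp L]
  have hpow : ∀ n : ℕ, exp L ^ n = exp (n * L) := fun n => (exp_nat_mul L n).symm
  have hDL : (36 * D : ℕ) * L ≤ 72 * L ^ 11 := by
    push_cast
    nlinarith [mul_le_mul_of_nonneg_right hD (by linarith : (0:ℝ) ≤ L)]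
  have hL4 : L ^ 4 ≤ L ^ 11 := pow_le_pow_right₀ hL1 (by norm_num)
  have hL11 : L ≤ L ^ 11 := le_self_pow₀ hL1 (by norm_num)
  have hcore : (2 * t + 1) * exp L ^ (36 * D) * exp L ^ 4 < exp (exp L) :=
    calc (2 * t + 1) * exp L ^ (36 * D) * exp L ^ 4
        ≤ exp L * exp (4 * L ^ 4) * exp ((36 * D : ℕ) * L) * exp ((4 : ℕ) * L) := by
          rw [hpow, hpow]
          gcongr
          have h₁ := one_le_exp (by positivity : 0 ≤ 4 * L ^ 4)
          nlinarith [mul_le_mul_of_nonneg_right h4 (exp_pos (4 * L ^ 4)).le]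
      _ = exp (L + 4 * L ^ 4 + (36 * D : ℕ) * L + (4 : ℕ) * L) := by simp only [exp_add]
      _ < exp (exp L) := by
          refine exp_lt_exp.mpr ?_
          push_cast at hDL ⊢
          nlinarith [mul_pow_lt_exp hL]
  have hB : 4 * exp L ≤ exp L ^ (36 * D) :=
    calc 4 * exp L ≤ exp L ^ 2 := by nlinarith
      _ ≤ exp L ^ (36 * D) := pow_le_pow_right₀ (by linarith) (by omega)
  have hK₁ : exp L ^ (3 * D) ≤ exp L ^ (36 * D) := pow_le_pow_right₀ (by linarith) (by omega)
  have hm' : (1 : ℝ) ≤ m := by exact_mod_cast hm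
  rw [lt_div_iff₀ (by positivity)]
  calc (m * t * (exp L ^ (36 * D) + 4 * exp L) + exp L ^ (3 * D)) * exp L ^ 4
      ≤ m * ((2 * t + 1) * exp L ^ (36 * D)) * exp L ^ 4 := by
        gcongr
        have h₁ := mul_le_mul_of_nonneg_left hB (by positivity : (0 : ℝ) ≤ m * t)
        have h₂ := mul_le_mul_of_nonneg_right hm' (by positivity : (0 : ℝ) ≤ exp L ^ (36 * D))
        nlinarith
    _ = m * ((2 * t + 1) * exp L ^ (36 * D) * exp L ^ 4) := by ring
    _ < m * exp (exp L) := by gcongr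

lemma code_budget {L : ℝ} (hL : 1 ≤ L) {m t M : ℕ} (ht : exp (3 * L ^ 4) ≤ t)
    (hM : (M : ℝ) ≤ exp (L ^ 4 * m)) : M * (2 ^ m * t ^ (m / 8)) ≤ t ^ m := by
  have hm : 7 * m ≤ 8 * (m - m / 8) := by omega
  have hsplit : (t : ℝ) ^ m = t ^ (m - m / 8) * t ^ (m / 8) := by
    rw [← pow_add, Nat.sub_add_cancel (Nat.div_le_self m 8)]
  have h2 : (2 : ℝ) ^ m ≤ exp m := by
    rw [← exp_one_pow]
    gcongr
    linarith [add_one_le_exp 1]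
  have hexp : exp (L ^ 4 * m) * exp m ≤ (t : ℝ) ^ (m - m / 8) := by
    rw [← exp_add]
    calc exp (L ^ 4 * m + m) ≤ exp (3 * L ^ 4) ^ (m - m / 8) := by
          rw [← exp_nat_mul]
          refine exp_le_exp.mpr ?_
          have hm' : ((7 * m : ℕ) : ℝ) ≤ ((8 * (m - m / 8) : ℕ) : ℝ) := by exact_mod_cast hm
          have hL4 : 1 ≤ L ^ 4 := one_le_pow₀ hL
          push_cast at hm'
          nlinarith [mul_le_mul_of_nonneg_left hm' (by positivity : (0:ℝ) ≤ L ^ 4)]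
      _ ≤ (t : ℝ) ^ (m - m / 8) := by gcongr
  have : (M : ℝ) * (2 ^ m * t ^ (m / 8)) ≤ t ^ m := by
    rw [hsplit, ← mul_assoc]
    gcongr
    calc (M : ℝ) * 2 ^ m ≤ exp (L ^ 4 * m) * exp m := by gcongr
      _ ≤ _ := hexp
  exact_mod_cast this

lemma exists_code_of_le_exp {L : ℝ} (hL : 1 ≤ L) {m M : ℕ}
    (hM : (M : ℝ) ≤ exp (L ^ 4 * m)) :
    ∃ cw : Fin M → Fin m → Fin ⌈exp (3 * L ^ 4)⌉₊,
      ∀ i j, i ≠ j → m / 8 < hammingDist (cw i) (cw j) := by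
  have : NeZero ⌈exp (3 * L ^ 4)⌉₊ := ⟨by positivity⟩
  exact exists_code_hammingDist_gt (by simpa using code_budget hL (Nat.le_ceil _) hM)

end Numerics

section DesiredTrees

open Real

lemma card_childrenFinset_le_degC {V : Type*} [Fintype V] {G : SimpleGraph V} (r p : V) :
    (childrenFinset G r p).card ≤ degC G p :=
  card_le_card fun _ hc => mem_filter.mpr ⟨mem_univ _, (mem_filter.mp hc).2.1⟩

lemma IsDesc.mem_iotaFinset {V : Type*} [Fintype V] {G : SimpleGraph V} {r x z : V} {ι : ℝ}
    (hc : G.Connected) (h : IsDesc G r x z) (hz : z ∈ iotaFinset ι G r) :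
    x ∈ iotaFinset ι G r := by
  simp only [iotaFinset, mem_filter, mem_univ, true_and] at hz ⊢
  exact hz.trans (by exact_mod_cast card_le_card (descFinset_subset hc h))

lemma two_mul_le_div {x n L : ℝ} (hL : 4 ≤ L) (hx : L ^ 2 ≤ x) (hn : n ≤ x / (4 * L) + 1) :
    2 * n ≤ x / L := by
  have h₁ : 4 ≤ x / L := (le_div_iff₀ (by linarith)).mpr (by nlinarith)
  have h₂ : x / (4 * L) = x / L / 4 := by ring
  linarith

lemma mul_lt_card_filter_iotaFinset {ι : ℝ} {ℵ m t : ℕ} {G : SimpleGraph (Fin ℵ)} {r : Fin ℵ}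
    (ht : G.IsTree) (hdeg : ∀ v, (degC G v : ℝ) ≤ (log ι⁻¹) ^ 2)
    (hiota : (ℵ : ℝ) / (log ι⁻¹) ^ 4 ≤ (iotaFinset ι G r).card) (hL₁ : 0 < log ι⁻¹)
    (hL : 10 ^ 17 ≤ log (log ι⁻¹)) (hℵ : (ℵ : ℝ) = m * exp (log ι⁻¹))
    (htL : (t : ℝ) ≤ exp (4 * log (log ι⁻¹) ^ 4)) :
    (m * t : ℝ) * ((log ι⁻¹) ^ (36 * ⌈log (log ι⁻¹) ^ 10⌉₊) + 4 * log ι⁻¹)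
      < ((iotaFinset ι G r).filter (⌈log (log ι⁻¹) ^ 10⌉₊ < G.dist r ·)).card := by
  set L₁ := log ι⁻¹
  set L := log L₁
  set D := ⌈L ^ 10⌉₊
  have hL₁L : L₁ = exp L := (exp_log hL₁).symm
  have hL10 : (1 : ℝ) ≤ L ^ 10 := one_le_pow₀ (by linarith)
  have hm : 1 ≤ m := by
    have hℵ₀ : 0 < ℵ := Fin.pos_iff_nonempty.mpr ht.connected.nonempty
    have : (0 : ℝ) < m * exp L₁ := hℵ ▸ by exact_mod_cast hℵ₀
    exact_mod_cast pos_of_mul_pos_left this (exp_pos _).le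
  have hball := card_distBall_le_pow ht.connected (by rw [hL₁L]; linarith [add_one_le_exp L])
    hdeg r D
  have hsplit : ((iotaFinset ι G r).card : ℝ)
      ≤ ((iotaFinset ι G r).filter (D < G.dist r ·)).card + (distBall G r D).card := by
    exact_mod_cast card_le_card_filter_lt_dist_add _ r D
  have := greedy_budget hL (Nat.one_le_iff_ne_zero.mpr (by positivity))
    (Nat.ceil_le_two_mul (by linarith)) htL hm
  rw [← hL₁L, ← hℵ] at this
  linarith

theorem exists_desired_pieces {ι : ℝ} {ℵ m t : ℕ} {G : SimpleGraph (Fin ℵ)} {r : Fin ℵ}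
    (ht : G.IsTree) (hdeg : ∀ v, (degC G v : ℝ) ≤ (log ι⁻¹) ^ 2)
    (hiota : (ℵ : ℝ) / (log ι⁻¹) ^ 4 ≤ (iotaFinset ι G r).card) (hι0 : 0 < ι) (hι1 : ι < 1)
    (hL : 10 ^ 17 ≤ log (log ι⁻¹)) (hm : (m : ℝ) = ι * ℵ)
    (htL : (t : ℝ) ≤ exp (4 * log (log ι⁻¹) ^ 4)) :
    ∃ P : Fin m × Fin t → Fin ℵ × Fin ℵ, Separated G (10 * ⌈log (log ι⁻¹) ^ 10⌉₊) P ∧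
      (∀ p, (P p).1 ≠ (P p).2) ∧
      (∀ p, G.dist (P p).1 (P p).2 = ⌈log (log ι⁻¹) ^ 10⌉₊) ∧
      (∀ p, ∀ v ∈ pairEnds (P p), v ∈ iotaFinset ι G r ∧ v ≠ r) ∧
      (∀ p u, (P p).1 ∈ descFinset G r u → (P p).2 ∈ descFinset G r u) ∧
      ∀ u, (log ι⁻¹) ^ 2 ≤ (descFinset G r u).card →
        2 * ((univ.filter fun p => (P p).2 ∈ descFinset G r u).card : ℝ)
          ≤ (descFinset G r u).card / log ι⁻¹ := by
  have hL₁ : 0 < log ι⁻¹ := log_pos ((one_lt_inv₀ hι0).mpr hι1)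
  have hℵ : (ℵ : ℝ) = m * exp (log ι⁻¹) := by
    rw [exp_log (by positivity), hm]
    field_simp
  have hL₁4 : 4 ≤ log ι⁻¹ := by
    rw [← exp_log hL₁]
    linarith [add_one_le_exp (log (log ι⁻¹))]
  obtain ⟨P, hsep, hP, hdense⟩ := exists_separated_pieces (r := r) ht
    ((iotaFinset ι G r).filter (⌈log (log ι⁻¹) ^ 10⌉₊ < G.dist r ·))
    (fun z hz => (mem_filter.mp hz).2) (B := 4 * log ι⁻¹)
    (K := log ι⁻¹ ^ (36 * ⌈log (log ι⁻¹) ^ 10⌉₊)) (by positivity) (by positivity)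
    (fun a => (card_distBall_le_pow ht.connected (by linarith) hdeg a _).trans_eq (by ring))
    (Fin m × Fin t) (by simpa using mul_lt_card_filter_iotaFinset ht hdeg hiota hL₁ hL hℵ htL)
  refine ⟨P, hsep, fun p h => ?_, fun p => (hP p).2.2, fun p v hv => ?_, fun p u hu => ?_,
    fun u hu => two_mul_le_div hL₁4 hu (hdense u)⟩
  · have := (hP p).2.2
    rw [h, SimpleGraph.dist_self] at this
    exact absurd this.symm (by positivity)
  · obtain ⟨hZp, hdesc, hdist⟩ := hP p
    obtain ⟨hiota, hdepth⟩ := mem_filter.mp hZp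
    rcases mem_pairEnds.mp hv with rfl | rfl
    · refine ⟨hdesc.mem_iotaFinset ht.connected hiota, fun h => ?_⟩
      rw [IsDesc, hdist, h, SimpleGraph.dist_self] at hdesc
      omega
    · exact ⟨hiota, fun h => by simp [h] at hdepth⟩
  · exact mem_descFinset.mpr ((mem_descFinset.mp hu).trans ht.connected (hP p).2.1)

end DesiredTrees

theorem desired_vertex_sets_general
    (ε : ℝ)
    (M₀ : ℕ) (hM₀ : 100 ≤ M₀)
    (ι : ℝ) (hι0 : 0 < ι) (hι1 : ι < 1)
    (hι : max (M₀ : ℝ) (max (1 / ε) (1 / Real.log ε⁻¹))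
        < Real.log (Real.log (Real.log (Real.log ι⁻¹))))
    (ℵ m : ℕ) (hm : (m : ℝ) = ι * ℵ)
    (G : SimpleGraph (Fin ℵ)) (r : Fin ℵ) (hG : DesiredTree ι ℵ G r)
    (M : ℕ) (hM : (M : ℝ) ≤ Real.exp (ι * (Real.log (Real.log ι⁻¹)) ^ 4 * ℵ)) :
    ∃ W : Fin M → (Fin m → Fin ℵ × Fin ℵ),
      (∀ i, IsPairing (W i)) ∧
      -- (1)
      (∀ i, ∀ v ∈ vertsOf (W i), v ∈ iotaFinset ι G r ∧ v ≠ r) ∧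
      -- (2)
      (∀ i, ∀ u : Fin ℵ, (Real.log ι⁻¹) ^ 2 ≤ ((descFinset G r u).card : ℝ) →
        (((vertsOf (W i) ∩ descFinset G r u).card : ℝ)
          ≤ ((descFinset G r u).card : ℝ) / Real.log ι⁻¹)) ∧
      -- (3)
      (∀ i j, i ≠ j →
        ι * ℵ / 2 ≤ ((((vertsOf (W i)) \ (vertsOf (W j))) ∪
            ((vertsOf (W j)) \ (vertsOf (W i)))).card : ℝ)) ∧
      -- (4)
      (∀ i k, (Real.log (Real.log ι⁻¹)) ^ 10 ≤ (G.dist (W i k).1 (W i k).2 : ℝ) ∧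
        (G.dist (W i k).1 (W i k).2 : ℝ) ≤ 2 * (Real.log (Real.log ι⁻¹)) ^ 10) ∧
      (∀ i, ∀ u ∈ vertsOf (W i), ∀ v ∈ vertsOf (W i), u ≠ v → ¬ Paired (W i) u v →
        10 * (Real.log (Real.log ι⁻¹)) ^ 10 ≤ (G.dist u v : ℝ)) ∧
      (∀ i j, i ≠ j → ∀ u ∈ vertsOf (W i), ∀ v ∈ vertsOf (W j), u ≠ v →
        (Real.log (Real.log ι⁻¹)) ^ 10 ≤ (G.dist u v : ℝ)) := by
  obtain ⟨ht, hdeg, -, hiota, -, u₁, u₂, hu, hroot, -⟩ := hG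
  have hdeg₂ : (2 : ℝ) ≤ Real.log ι⁻¹ ^ 2 := by
    have := card_childrenFinset_le_degC (G := G) r r
    rw [hroot, card_pair hu] at this
    exact le_trans (by exact_mod_cast this) (hdeg r)
  have hM₀' : (100 : ℝ) ≤ M₀ := by exact_mod_cast hM₀
  have hL : 10 ^ 17 ≤ Real.log (Real.log ι⁻¹) :=
    ten_pow_le_log_of_lt_log_log_log hdeg₂ ((hM₀'.trans (le_max_left _ _)).trans_lt hι)
  set L := Real.log (Real.log ι⁻¹)
  have hL10 : (1 : ℝ) ≤ L ^ 10 := one_le_pow₀ (by linarith)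
  obtain ⟨P, hsep, hne, hdist, hends, hdesc, hdense⟩ := exists_desired_pieces ht hdeg hiota
    hι0 hι1 hL hm (ceil_exp_le (one_le_pow₀ (by linarith)))
  obtain ⟨cw, hcw⟩ := exists_code_of_le_exp (L := L) (m := m) (M := M) (by linarith)
    (hM.trans_eq (by rw [hm]; ring_nf))
  refine ⟨fun i => pairingOfCode P (cw i), fun i => isPairing_pairingOfCode hsep hne _,
    fun i v hv => ?_, fun i u hu => ?_, fun i j hij => ?_, fun i k => ?_,
    fun i u hu v hv huv hnp => ?_, fun i j _ u hu v hv huv => ?_⟩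
  · obtain ⟨k, hk⟩ := mem_vertsOf.mp hv
    exact hends _ v hk
  · exact le_trans (by exact_mod_cast card_vertsOf_inter_le (hdesc · u) (cw i)) (hdense u hu)
  · have h₁ := four_mul_hammingDist_le_card_symmDiff hsep hne (cw i) (cw j)
    have h₂ := hcw i j hij
    dsimp only
    rw [← hm, div_le_iff₀ two_pos]
    norm_cast
    omega
  · simp only [pairingOfCode, hdist]
    exact ⟨Nat.le_ceil _, Nat.ceil_le_two_mul (by linarith)⟩
  · have := lt_dist_of_not_paired hsep hu hv huv hnp
    have : (10 * ⌈L ^ 10⌉₊ : ℕ) ≤ (G.dist u v : ℝ) := by exact_mod_cast this.le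
    push_cast at this
    linarith [Nat.le_ceil (L ^ 10)]
  · have := le_dist_of_mem_vertsOf hsep (fun p => (hdist p).ge) (by omega) hu hv huv
    exact (Nat.le_ceil _).trans (by exact_mod_cast this)

/-- **Statement 3** (Theorem 2.9 of the paper).  For every desired rooted tree
`𝐓 ∈ 𝒯̃_ℵ` there exist `𝙼 = exp(ι (log log ι⁻¹)⁴ ℵ)` pairings `W₁, …, W_𝙼` of `𝐓`
(each consisting of `ιℵ` pairs of distinct vertices) such that:
(1) all paired vertices lie in `V(𝐓_ι) ∖ {root}`;
(2) each pairing meets every descendant tree with at least `log²(ι⁻¹)` vertices in at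
most a `1/log(ι⁻¹)` fraction of its vertices;
(3) distinct pairings have vertex sets with symmetric difference at least `ιℵ/2`;
(4) paired vertices are at tree-distance between `(log log ι⁻¹)^{10}` and
`2(log log ι⁻¹)^{10}`; distinct non-paired vertices of one pairing are at distance at
least `10(log log ι⁻¹)^{10}`; and distinct vertices of two different pairings are at
distance at least `(log log ι⁻¹)^{10}`. -/
theorem desired_vertex_sets
    (ε : ℝ) (hε0 : 0 < ε) (hε1 : ε < 1)
    (M₀ : ℕ) (hM₀ : 100 ≤ M₀)
    (ι : ℝ) (hι0 : 0 < ι) (hι1 : ι < 1)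
    (hι : max (M₀ : ℝ) (max (1 / ε) (1 / Real.log ε⁻¹))
        < Real.log (Real.log (Real.log (Real.log ι⁻¹))))
    (ℵ m : ℕ) (hm : (m : ℝ) = ι * ℵ) (hodd : Odd ℵ)
    (G : SimpleGraph (Fin ℵ)) (r : Fin ℵ) (hG : DesiredTree ι ℵ G r)
    (M : ℕ) (hM : (M : ℝ) ≤ Real.exp (ι * (Real.log (Real.log ι⁻¹)) ^ 4 * ℵ)) :
    ∃ W : Fin M → (Fin m → Fin ℵ × Fin ℵ),
      (∀ i, IsPairing (W i)) ∧
      -- (1)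
      (∀ i, ∀ v ∈ vertsOf (W i), v ∈ iotaFinset ι G r ∧ v ≠ r) ∧
      -- (2)
      (∀ i, ∀ u : Fin ℵ, (Real.log ι⁻¹) ^ 2 ≤ ((descFinset G r u).card : ℝ) →
        (((vertsOf (W i) ∩ descFinset G r u).card : ℝ)
          ≤ ((descFinset G r u).card : ℝ) / Real.log ι⁻¹)) ∧
      -- (3)
      (∀ i j, i ≠ j →
        ι * ℵ / 2 ≤ ((((vertsOf (W i)) \ (vertsOf (W j))) ∪
            ((vertsOf (W j)) \ (vertsOf (W i)))).card : ℝ)) ∧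
      -- (4)
      (∀ i k, (Real.log (Real.log ι⁻¹)) ^ 10 ≤ (G.dist (W i k).1 (W i k).2 : ℝ) ∧
        (G.dist (W i k).1 (W i k).2 : ℝ) ≤ 2 * (Real.log (Real.log ι⁻¹)) ^ 10) ∧
      (∀ i, ∀ u ∈ vertsOf (W i), ∀ v ∈ vertsOf (W i), u ≠ v → ¬ Paired (W i) u v →
        10 * (Real.log (Real.log ι⁻¹)) ^ 10 ≤ (G.dist u v : ℝ)) ∧
      (∀ i j, i ≠ j → ∀ u ∈ vertsOf (W i), ∀ v ∈ vertsOf (W j), u ≠ v →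
        (Real.log (Real.log ι⁻¹)) ^ 10 ≤ (G.dist u v : ℝ)) :=
  desired_vertex_sets_general ε M₀ hM₀ ι hι0 hι1 hι ℵ m hm G r hG M hM
end
end

section
/- Let l ≥ 1 be an integer, let σ₀, σ_l ∈ {−1,+1} be fixed, and let σ₁,…,σ_{l−1} be i.i.d. uniform random signs in {−1,+1}. Then for all real numbers a₁,…,a_l and b₁,…,b_l, 𝔼[∏_{i=1}^{l}(a_i + b_i·σ_{i−1}σ_i)] = ∏_{i=1}^{l}a_i + σ₀σ_l·∏_{i=1}^{l}b_i. -/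
/-!
Induction on `l`, summing out the last interior spin `u = σ_{l-1}`. Given `u`, the expectation
of the first `l - 1` factors is `∏ a' + σ₀ u ∏ b'` by induction, and averaging
`(∏ a' + σ₀ u ∏ b') (a_l + b_l u σ_l)` over `u = ±1` kills the terms linear in `u`, while
`u² = 1` in the remaining one.

A configuration on `l + 2` vertices is `Fin.snoc h v`: the dummy `v` sits at the fixed endpoint,
and `h (Fin.last l)` is the spin `u` that becomes the endpoint of the shorter path.
-/

open Finset

/-- The spin configuration along a path with `l + 1` vertices: the endpoint spins
`σ0` (at vertex `0`) and `σl` (at vertex `l`) are fixed, while the interior spins are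
determined by the Boolean configuration `g` (mapped to `±1`). -/
noncomputable def pathSpin (l : ℕ) (σ0 σl : ℝ) (g : Fin (l + 1) → Bool)
    (j : Fin (l + 1)) : ℝ :=
  if j = 0 then σ0 else if j = Fin.last l then σl else (if g j then 1 else -1)

theorem Fin.sum_pi_eq_sum_sum_snoc {n : ℕ} {β M : Type*} [Fintype β] [AddCommMonoid M]
    (F : (Fin (n + 1) → β) → M) :
    ∑ g, F g = ∑ h : Fin n → β, ∑ w, F (Fin.snoc h w) := by
  rw [← (Fin.snocEquiv fun _ => β).sum_comp, Fintype.sum_prod_type, sum_comm]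
  rfl

theorem Fin.sum_pi_eq_card_smul_sum_snoc {n : ℕ} {β M : Type*} [Fintype β] [AddCommMonoid M]
    (F : (Fin (n + 1) → β) → M) (v : β) (hF : ∀ h w, F (Fin.snoc h w) = F (Fin.snoc h v)) :
    ∑ g, F g = Fintype.card β • ∑ h : Fin n → β, F (Fin.snoc h v) := by
  simp only [Fin.sum_pi_eq_sum_sum_snoc F, hF, Finset.sum_const, Finset.card_univ,
    Finset.smul_sum]

def boolSign (v : Bool) : ℝ := if v then 1 else -1

lemma pathSpin_zero {n : ℕ} (s t : ℝ) (g : Fin (n + 1) → Bool) : pathSpin n s t g 0 = s :=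
  if_pos rfl

lemma pathSpin_last {n : ℕ} (hn : n ≠ 0) (s t : ℝ) (g : Fin (n + 1) → Bool) :
    pathSpin n s t g (Fin.last n) = t := by
  simp [pathSpin, Fin.ext_iff, hn]

lemma pathSpin_snoc_last {n : ℕ} (s t : ℝ) (h : Fin n → Bool) (v w : Bool) :
    pathSpin n s t (Fin.snoc h w) = pathSpin n s t (Fin.snoc h v) := by
  funext j
  unfold pathSpin
  by_cases hl : j = Fin.last n
  · simp only [hl, if_true]
  · obtain ⟨i, rfl⟩ := Fin.exists_castSucc_eq.mpr hl
    simp only [Fin.snoc_castSucc]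

lemma pathSpin_snoc_castSucc {n : ℕ} (hn : n ≠ 0) (s t : ℝ) (h : Fin (n + 1) → Bool)
    (v : Bool) (j : Fin (n + 1)) :
    pathSpin (n + 1) s t (Fin.snoc h v) j.castSucc =
      pathSpin n s (boolSign (h (Fin.last n))) h j := by
  unfold pathSpin boolSign
  by_cases hl : j = Fin.last n
  · have hlast : Fin.last n ≠ 0 := Fin.ext_iff.not.mpr (by simpa using hn)
    simp only [hl, Fin.castSucc_ne_last, hlast, if_false, Fin.snoc_castSucc,
      Fin.castSucc_eq_zero_iff, if_true]
  · simp only [Fin.castSucc_ne_last, hl, if_false, Fin.snoc_castSucc, Fin.castSucc_eq_zero_iff]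

noncomputable def pathWeight (l : ℕ) (a b : Fin l → ℝ) (s t : ℝ)
    (g : Fin (l + 1) → Bool) : ℝ :=
  ∏ i : Fin l, (a i + b i * pathSpin l s t g i.castSucc * pathSpin l s t g i.succ)

lemma pathWeight_snoc_last {n : ℕ} (a b : Fin n → ℝ) (s t : ℝ) (h : Fin n → Bool)
    (v w : Bool) :
    pathWeight n a b s t (Fin.snoc h w) = pathWeight n a b s t (Fin.snoc h v) := by
  rw [pathWeight, pathWeight, pathSpin_snoc_last s t h v w]

lemma pathWeight_snoc {n : ℕ} (hn : n ≠ 0) (a b : Fin (n + 1) → ℝ) (s t : ℝ)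
    (h : Fin (n + 1) → Bool) (v : Bool) :
    pathWeight (n + 1) a b s t (Fin.snoc h v) =
      pathWeight n (Fin.init a) (Fin.init b) s (boolSign (h (Fin.last n))) h *
        (a (Fin.last n) + b (Fin.last n) * boolSign (h (Fin.last n)) * t) := by
  rw [pathWeight, Fin.prod_univ_castSucc, Fin.succ_last, pathSpin_last n.succ_ne_zero,
    pathSpin_snoc_castSucc hn, pathSpin_last hn]
  simp only [Fin.succ_castSucc, pathSpin_snoc_castSucc hn]
  rfl

lemma sum_pathWeight {l : ℕ} (hl : 1 ≤ l) (a b : Fin l → ℝ) (s t : ℝ) :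
    ∑ g, pathWeight l a b s t g = 2 ^ (l + 1) * (∏ i, a i + s * t * ∏ i, b i) := by
  induction l, hl using Nat.le_induction generalizing t with
  | base =>
    have hw (g : Fin 2 → Bool) : pathWeight 1 a b s t g = a 0 + s * t * b 0 := by
      rw [pathWeight, Fin.prod_univ_one, Fin.castSucc_zero, Fin.succ_zero_eq_one, pathSpin_zero]
      rw [show (1 : Fin 2) = Fin.last 1 from rfl, pathSpin_last one_ne_zero]
      ring
    simp only [hw, Finset.sum_const, Finset.card_univ, Fintype.card_pi, Fintype.card_bool,
      nsmul_eq_mul, Fin.prod_univ_one]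
    ring
  | succ n hn ih =>
    have hn0 : n ≠ 0 := by omega
    have half_sum (u : ℝ) (w : Bool) :
        ∑ h : Fin n → Bool, pathWeight n (Fin.init a) (Fin.init b) s u (Fin.snoc h w) =
          2 ^ n * (∏ i, Fin.init a i + s * u * ∏ i, Fin.init b i) := by
      have := ih (Fin.init a) (Fin.init b) u
      rw [Fin.sum_pi_eq_card_smul_sum_snoc _ w (pathWeight_snoc_last _ _ s u · w),
        Fintype.card_bool, nsmul_eq_mul, pow_succ] at this
      push_cast at this
      linarith
    calc ∑ g, pathWeight (n + 1) a b s t g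
        = 2 * ∑ h : Fin (n + 1) → Bool,
            pathWeight n (Fin.init a) (Fin.init b) s (boolSign (h (Fin.last n))) h *
              (a (Fin.last n) + b (Fin.last n) * boolSign (h (Fin.last n)) * t) := by
          rw [Fin.sum_pi_eq_card_smul_sum_snoc _ false (pathWeight_snoc_last a b s t · false)]
          simp only [pathWeight_snoc hn0, Fintype.card_bool, nsmul_eq_mul, Nat.cast_ofNat]
      _ = 2 * ∑ w : Bool, (∑ h : Fin n → Bool,
            pathWeight n (Fin.init a) (Fin.init b) s (boolSign w) (Fin.snoc h w)) *
              (a (Fin.last n) + b (Fin.last n) * boolSign w * t) := by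
          rw [Fin.sum_pi_eq_sum_sum_snoc, sum_comm]
          simp only [Fin.snoc_last, sum_mul]
      _ = 2 ^ (n + 1 + 1) * (∏ i, a i + s * t * ∏ i, b i) := by
          simp only [half_sum, Fintype.sum_bool, boolSign, if_true, Bool.false_eq_true, if_false,
            Fin.prod_univ_castSucc a, Fin.prod_univ_castSucc b, Fin.init]
          ring

/-- The expectation over the interior spins is the normalized sum over all Boolean
configurations `g : Fin (l+1) → Bool`; the values of `g` at the two endpoints are dummies,
whence the normalization `2 ^ (l+1)`. -/
theorem chain_expectation_general
    (l : ℕ) (hl : 1 ≤ l) (σ0 σl : ℝ)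
    (a b : Fin l → ℝ) :
    (1 / 2 ^ (l + 1)) *
      ∑ g : Fin (l + 1) → Bool,
        ∏ i : Fin l,
          (a i + b i * pathSpin l σ0 σl g i.castSucc * pathSpin l σ0 σl g i.succ)
      = ∏ i, a i + σ0 * σl * ∏ i, b i := by
  have h := sum_pathWeight hl a b σ0 σl
  unfold pathWeight at h
  rw [h]
  field_simp

/-- **Statement 9** (expectation identity along a self-avoiding path).
Let `l ≥ 1`, let `σ0, σl ∈ {−1,+1}` be fixed endpoint spins and let the interior spins
`σ1, …, σ_{l−1}` be i.i.d. uniform random signs.  Then for all reals `a i`, `b i`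
(`i = 1, …, l`),
`𝔼[∏ i (a i + b i · σ_{i−1} σ_i)] = ∏ i a i + σ0 σl · ∏ i b i`.
The expectation over the interior spins is realized as the normalized sum over all
Boolean configurations `g : Fin (l+1) → Bool` (the values of `g` at the two endpoints
are unused dummies, whence the normalization `2 ^ (l+1)`). -/
theorem chain_expectation
    (l : ℕ) (hl : 1 ≤ l) (σ0 σl : ℝ)
    (h0 : σ0 = 1 ∨ σ0 = -1) (hσl : σl = 1 ∨ σl = -1)
    (a b : Fin l → ℝ) :
    (1 / 2 ^ (l + 1)) *
      ∑ g : Fin (l + 1) → Bool,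
        ∏ i : Fin l,
          (a i + b i * pathSpin l σ0 σl g i.castSucc * pathSpin l σ0 σl g i.succ)
      = ∏ i, a i + σ0 * σl * ∏ i, b i :=
  chain_expectation_general l hl σ0 σl a b
end

section
/- Let H be a graph with vertex set contained in [n], and let L₁,…,L_k be self-avoiding paths with EndP(L_i) ⊂ V(H) and |E(L_i)| ≤ M for every i. Set S = H ∪ L₁ ∪ ⋯ ∪ L_k. Then the edge set E(S)∖E(H) can be decomposed into t self-avoiding paths P₁,…,P_t such that: (1) V(P_j) ∩ (V(H) ∪ ⋃_{k'<j}V(P_{k'}) ∪ 𝓛(S)) = EndP(P_j) for all 1 ≤ j ≤ t; (2) |E(P_i)| ≤ M for all i; (3) t = τ(S) − τ(H). -/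
open Finset
open scoped Classical
noncomputable section

/-- The degree of `v` in a simple graph, as a `Finset` count. -/
def degF {n : ℕ} (G : SimpleGraph (Fin n)) (v : Fin n) : ℕ :=
  (Finset.univ.filter (fun w => G.Adj v w)).card

/-- The support of a simple graph (non-isolated vertices), as a `Finset`. -/
def supportF {n : ℕ} (G : SimpleGraph (Fin n)) : Finset (Fin n) :=
  Finset.univ.filter (fun v => v ∈ G.support)

/-- The edge set of a simple graph, as a `Finset` of unordered pairs. -/
def edgesF {n : ℕ} (G : SimpleGraph (Fin n)) : Finset (Sym2 (Fin n)) :=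
  Finset.univ.filter (fun e => e ∈ G.edgeSet)

/-- The set of leaves (degree-1 vertices) of a simple graph. -/
def leavesF {n : ℕ} (G : SimpleGraph (Fin n)) : Finset (Fin n) :=
  Finset.univ.filter (fun v => degF G v = 1)

/-- The edges traced by a walk `q` through `L + 1` vertices. -/
def pathEdges {n L : ℕ} (q : Fin (L + 1) → Fin n) : Finset (Sym2 (Fin n)) :=
  Finset.univ.image (fun i : Fin L => s(q i.castSucc, q i.succ))

/-- The vertices visited by a walk. -/
def pathVerts {n L : ℕ} (q : Fin (L + 1) → Fin n) : Finset (Fin n) :=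
  Finset.univ.image q

/-- The graph consisting of the edges traced by a walk. -/
def pathG {n L : ℕ} (q : Fin (L + 1) → Fin n) : SimpleGraph (Fin n) :=
  SimpleGraph.fromEdgeSet (↑(pathEdges q))


/-!
Process the paths `L₁, L₂, …` in turn, keeping the explored set `W`, initially `V(H)` and
growing by the vertices of every path produced. Cutting the current path at each of its
vertices in `W` leaves pieces of two kinds: single edges already present, which are discarded,
and ears, i.e. paths with only new edges whose interior avoids `W`. An ear with `m` edges adds
`m` edges and `m - 1` vertices, so each ear raises the excess by exactly one. Interior vertices
of an ear are interior vertices of some `Lᵢ`, so they have degree at least two in `S` and are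
not leaves.
-/

open SimpleGraph

namespace Fin

lemma biUnion_univ_succ {α : Type*} [DecidableEq α] {k : ℕ} (f : Fin (k + 1) → Finset α) :
    univ.biUnion f = f 0 ∪ univ.biUnion fun i : Fin k => f i.succ := by
  ext; simp [Fin.exists_fin_succ]

lemma biUnion_filter_lt_succ {α : Type*} [DecidableEq α] {k : ℕ} (f : Fin (k + 1) → Finset α)
    (j : Fin k) :
    (univ.filter fun i => i < j.succ).biUnion f
      = f 0 ∪ (univ.filter fun i => i < j).biUnion fun i : Fin k => f i.succ := by
  ext; simp [Fin.exists_fin_succ, Fin.succ_pos]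

lemma iSup_succ {α : Type*} [CompleteLattice α] {k : ℕ} (f : Fin (k + 1) → α) :
    ⨆ i, f i = f 0 ⊔ ⨆ i : Fin k, f i.succ :=
  le_antisymm
    (iSup_le (Fin.cases le_sup_left fun i => le_sup_of_le_right (le_iSup_of_le i le_rfl)))
    (sup_le (le_iSup f 0) (iSup_le fun i => le_iSup f i.succ))

end Fin

/-- The walk `vtx 0, vtx 1, …, vtx len`; the values of `vtx` beyond `len` play no role. -/
structure VertexSeq (V : Type*) where
  len : ℕ
  vtx : ℕ → V

namespace VertexSeq

variable {V : Type*} {p q L : VertexSeq V} {W : Finset V} {a c : ℕ}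

def IsPath (p : VertexSeq V) : Prop := Set.InjOn p.vtx (Set.Iic p.len)

def IsEar (W : Finset V) (p : VertexSeq V) : Prop :=
  p.vtx 0 ∈ W ∧ p.vtx p.len ∈ W ∧ ∀ c, 0 < c → c < p.len → p.vtx c ∉ W

def IsSegmentOf (p L : VertexSeq V) : Prop :=
  ∃ a, a + p.len ≤ L.len ∧ ∀ c ≤ p.len, p.vtx c = L.vtx (a + c)

def take (p : VertexSeq V) (a : ℕ) : VertexSeq V := ⟨a, p.vtx⟩

def drop (p : VertexSeq V) (a : ℕ) : VertexSeq V := ⟨p.len - a, fun c => p.vtx (a + c)⟩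

lemma take_isSegmentOf (ha : a ≤ p.len) : (p.take a).IsSegmentOf p :=
  ⟨0, by simpa [take], fun c _ => by simp [take]⟩

lemma drop_isSegmentOf (ha : a ≤ p.len) : (p.drop a).IsSegmentOf p :=
  ⟨a, by simp only [drop]; omega, fun _ _ => rfl⟩

lemma IsSegmentOf.trans (hp : p.IsSegmentOf q) (hq : q.IsSegmentOf L) : p.IsSegmentOf L := by
  obtain ⟨a, ha, hpa⟩ := hp
  obtain ⟨b, hb, hqb⟩ := hq
  exact ⟨b + a, by omega, fun c hc => by rw [hpa c hc, hqb (a + c) (by omega), Nat.add_assoc]⟩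

lemma IsSegmentOf.len_le (h : p.IsSegmentOf L) : p.len ≤ L.len := by
  obtain ⟨a, ha, -⟩ := h
  omega

lemma IsSegmentOf.isPath (h : p.IsSegmentOf L) (hL : L.IsPath) : p.IsPath := by
  obtain ⟨a, ha, hpa⟩ := h
  intro c hc d hd hcd
  simp only [Set.mem_Iic] at hc hd
  rw [hpa c hc, hpa d hd] at hcd
  have := hL (show a + c ∈ Set.Iic L.len by simp only [Set.mem_Iic]; omega)
    (show a + d ∈ Set.Iic L.len by simp only [Set.mem_Iic]; omega) hcd
  omega

lemma IsSegmentOf.exists_interior (h : p.IsSegmentOf L) (hc0 : 0 < c) (hc : c < p.len) :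
    ∃ d, 0 < d ∧ d < L.len ∧ p.vtx c = L.vtx d := by
  obtain ⟨a, ha, hpa⟩ := h
  exact ⟨a + c, by omega, by omega, hpa c hc.le⟩

lemma exists_take_isEar (h0 : p.vtx 0 ∈ W) (hlen : p.vtx p.len ∈ W) (hpos : 0 < p.len) :
    ∃ a, 0 < a ∧ a ≤ p.len ∧ (p.take a).IsEar W := by
  classical
  have hex : ∃ a, 0 < a ∧ p.vtx a ∈ W := ⟨p.len, hpos, hlen⟩
  exact ⟨Nat.find hex, (Nat.find_spec hex).1, Nat.find_min' hex ⟨hpos, hlen⟩, h0,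
    (Nat.find_spec hex).2, fun c hc0 hc hcW => Nat.find_min hex hc ⟨hc0, hcW⟩⟩

lemma IsPath.vtx_ne_succ (hp : p.IsPath) (hc : c < p.len) : p.vtx c ≠ p.vtx (c + 1) := by
  intro h
  have := hp (show c ∈ Set.Iic p.len by simp only [Set.mem_Iic]; omega)
    (show c + 1 ∈ Set.Iic p.len by simp only [Set.mem_Iic]; omega) h
  omega

def toFin (p : VertexSeq V) : Fin (p.len + 1) → V := fun a => p.vtx a

def ofFin {L : ℕ} (q : Fin (L + 1) → V) : VertexSeq V := ⟨L, fun c => q (Fin.clamp c L)⟩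

lemma ofFin_vtx {L c : ℕ} (q : Fin (L + 1) → V) (hc : c ≤ L) :
    (ofFin q).vtx c = q ⟨c, Nat.lt_succ_of_le hc⟩ := by
  simp [ofFin, Fin.clamp, hc]

@[simp] lemma toFin_zero (p : VertexSeq V) : p.toFin 0 = p.vtx 0 := by
  simp [toFin]

@[simp] lemma toFin_last (p : VertexSeq V) : p.toFin (Fin.last p.len) = p.vtx p.len := rfl

lemma isPath_ofFin {L : ℕ} {q : Fin (L + 1) → V} (hq : Function.Injective q) :
    (ofFin q).IsPath := by
  intro c hc d hd h
  rw [ofFin_vtx q hc, ofFin_vtx q hd] at h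
  exact Fin.mk.inj (hq h)

lemma IsPath.injective_toFin (hp : p.IsPath) : Function.Injective p.toFin :=
  fun a b h => Fin.ext (hp (Nat.lt_succ_iff.mp a.isLt) (Nat.lt_succ_iff.mp b.isLt) h)

variable [DecidableEq V]

def edges (p : VertexSeq V) : Finset (Sym2 V) :=
  (range p.len).image fun i => s(p.vtx i, p.vtx (i + 1))

def verts (p : VertexSeq V) : Finset V := (range (p.len + 1)).image p.vtx

def graph (p : VertexSeq V) : SimpleGraph V := fromEdgeSet p.edges

@[simp] lemma mem_edges {e : Sym2 V} :
    e ∈ p.edges ↔ ∃ i < p.len, s(p.vtx i, p.vtx (i + 1)) = e := by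
  simp [edges]

@[simp] lemma mem_verts {v : V} : v ∈ p.verts ↔ ∃ i ≤ p.len, p.vtx i = v := by
  simp [verts]

lemma edges_take_union_drop (ha : a ≤ p.len) :
    (p.take a).edges ∪ (p.drop a).edges = p.edges := by
  ext e
  simp only [mem_union, mem_edges, take, drop]
  constructor
  · rintro (⟨i, hi, rfl⟩ | ⟨i, hi, rfl⟩)
    · exact ⟨i, by omega, rfl⟩
    · exact ⟨a + i, by omega, by rw [Nat.add_assoc]⟩
  · rintro ⟨i, hi, rfl⟩
    by_cases h : i < a
    · exact Or.inl ⟨i, h, rfl⟩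
    · obtain ⟨j, rfl⟩ := Nat.exists_eq_add_of_le (not_lt.mp h)
      exact Or.inr ⟨j, by omega, by rw [Nat.add_assoc]⟩

lemma verts_take_union_drop (ha : a ≤ p.len) :
    (p.take a).verts ∪ (p.drop a).verts = p.verts := by
  ext v
  simp only [mem_union, mem_verts, take, drop]
  constructor
  · rintro (⟨i, hi, rfl⟩ | ⟨i, hi, rfl⟩)
    · exact ⟨i, by omega, rfl⟩
    · exact ⟨a + i, by omega, rfl⟩
  · rintro ⟨i, hi, rfl⟩
    by_cases h : i ≤ a
    · exact Or.inl ⟨i, h, rfl⟩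
    · obtain ⟨j, rfl⟩ := Nat.exists_eq_add_of_le (le_of_not_ge h)
      exact Or.inr ⟨j, by omega, rfl⟩

lemma graph_take_sup_drop (ha : a ≤ p.len) : (p.take a).graph ⊔ (p.drop a).graph = p.graph := by
  rw [graph, graph, graph, ← fromEdgeSet_union, ← coe_union, edges_take_union_drop ha]

lemma IsPath.graph_adj (hp : p.IsPath) (hc : c < p.len) : p.graph.Adj (p.vtx c) (p.vtx (c + 1)) :=
  (fromEdgeSet_adj _).mpr ⟨mem_edges.mpr ⟨c, hc, rfl⟩, hp.vtx_ne_succ hc⟩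

lemma IsPath.edgeSet_graph (hp : p.IsPath) : p.graph.edgeSet = p.edges := by
  ext e
  simp only [graph, edgeSet_fromEdgeSet, Set.mem_sdiff, mem_coe, Sym2.mem_diagSet,
    and_iff_left_iff_imp, mem_edges]
  rintro ⟨i, hi, rfl⟩
  simpa using hp.vtx_ne_succ hi

lemma IsPath.card_edges (hp : p.IsPath) : p.edges.card = p.len := by
  rw [edges, card_image_of_injOn, card_range]
  intro c hc d hd hcd
  simp only [coe_range, Set.mem_Iio] at hc hd
  have mem : ∀ i, i ≤ p.len → i ∈ Set.Iic p.len := fun i hi => hi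
  rcases Sym2.eq_iff.mp hcd with ⟨h, -⟩ | ⟨h, h'⟩
  · exact hp (mem c hc.le) (mem d hd.le) h
  · have := hp (mem c hc.le) (mem (d + 1) hd) h
    have := hp (mem (c + 1) hc) (mem d hd.le) h'
    omega

lemma IsEar.card_union_verts (hear : p.IsEar W) (hp : p.IsPath) :
    (W ∪ p.verts).card = W.card + (p.len - 1) := by
  have hsplit : W ∪ p.verts = W ∪ (Ioo 0 p.len).image p.vtx := by
    ext v
    simp only [mem_union, mem_verts, mem_image, mem_Ioo]
    constructor
    · rintro (hv | ⟨i, hi, rfl⟩)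
      · exact Or.inl hv
      · rcases (show i = 0 ∨ i = p.len ∨ (0 < i ∧ i < p.len) by omega) with rfl | rfl | h
        · exact Or.inl hear.1
        · exact Or.inl hear.2.1
        · exact Or.inr ⟨i, h, rfl⟩
    · rintro (hv | ⟨i, hi, rfl⟩)
      · exact Or.inl hv
      · exact Or.inr ⟨i, hi.2.le, rfl⟩
  have hdisj : Disjoint W ((Ioo 0 p.len).image p.vtx) := by
    simp only [disjoint_right, mem_image, mem_Ioo]
    rintro _ ⟨i, hi, rfl⟩
    exact hear.2.2 i hi.1 hi.2
  have hinj : Set.InjOn p.vtx (Ioo 0 p.len) :=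
    hp.mono fun i hi => by simp only [coe_Ioo, Set.mem_Ioo, Set.mem_Iic] at hi ⊢; omega
  rw [hsplit, card_union_of_disjoint hdisj, card_image_of_injOn hinj, Nat.card_Ioo, Nat.sub_zero]

lemma IsEar.verts_inter_union (hear : p.IsEar W) {X : Finset V}
    (hX : ∀ c, 0 < c → c < p.len → p.vtx c ∉ X) :
    p.verts ∩ (W ∪ X) = {p.vtx 0, p.vtx p.len} := by
  ext v
  simp only [mem_inter, mem_union, mem_verts, mem_insert, mem_singleton]
  constructor
  · rintro ⟨⟨i, hi, rfl⟩, hW⟩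
    rcases (show i = 0 ∨ i = p.len ∨ (0 < i ∧ i < p.len) by omega) with rfl | rfl | h
    · exact Or.inl rfl
    · exact Or.inr rfl
    · exact (hW.elim (hear.2.2 i h.1 h.2) (hX i h.1 h.2)).elim
  · rintro (rfl | rfl)
    · exact ⟨⟨0, by omega, rfl⟩, Or.inl hear.1⟩
    · exact ⟨⟨p.len, le_rfl, rfl⟩, Or.inl hear.2.1⟩

def IsEarSequence (B : Finset V) {t : ℕ} (ps : Fin t → VertexSeq V) : Prop :=
  ∀ j, (ps j).IsEar (B ∪ (univ.filter fun k => k < j).biUnion fun k => (ps k).verts)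

lemma isEarSequence_cons {B : Finset V} {t : ℕ} {ps : Fin t → VertexSeq V} :
    IsEarSequence B (Fin.cons p ps : Fin (t + 1) → VertexSeq V)
      ↔ p.IsEar B ∧ IsEarSequence (B ∪ p.verts) ps := by
  simp [IsEarSequence, Fin.forall_fin_succ, Fin.biUnion_filter_lt_succ, union_assoc]

lemma IsEarSequence.card_union_biUnion_verts {t : ℕ} {B : Finset V} {ps : Fin t → VertexSeq V}
    (h : IsEarSequence B ps) (hps : ∀ j, (ps j).IsPath) :
    (B ∪ univ.biUnion fun j => (ps j).verts).card = B.card + ∑ j, ((ps j).len - 1) := by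
  induction ps using Fin.consInduction generalizing B with
  | elim0 => simp
  | cons p ps ih =>
    rw [isEarSequence_cons] at h
    simp only [Fin.forall_fin_succ, Fin.cons_zero, Fin.cons_succ] at hps
    simp only [Fin.biUnion_univ_succ, Fin.cons_zero, Fin.cons_succ, Fin.sum_univ_succ,
      ← union_assoc]
    rw [ih h.2 hps.2, h.1.card_union_verts hps.1, Nat.add_assoc]

end VertexSeq

section Graphs

variable {n : ℕ} {G G' : SimpleGraph (Fin n)} {B : Finset (Fin n)} {p : VertexSeq (Fin n)}

lemma mem_edgesF {e : Sym2 (Fin n)} : e ∈ edgesF G ↔ e ∈ G.edgeSet := by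
  simp [edgesF]

lemma mem_supportF {v : Fin n} : v ∈ supportF G ↔ ∃ w, G.Adj v w := by
  simp [supportF, mem_support]

lemma edgesF_sup : edgesF (G ⊔ G') = edgesF G ∪ edgesF G' := by
  ext e
  simp [mem_edgesF, edgeSet_sup]

lemma supportF_sup : supportF (G ⊔ G') = supportF G ∪ supportF G' := by
  ext v
  simp [mem_supportF, sup_adj, exists_or]

lemma supportF_graph_subset (p : VertexSeq (Fin n)) : supportF p.graph ⊆ p.verts := by
  intro v hv
  obtain ⟨w, hvw⟩ := mem_supportF.mp hv
  obtain ⟨i, hi, he⟩ := VertexSeq.mem_edges.mp ((fromEdgeSet_adj _).mp hvw).1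
  rcases Sym2.eq_iff.mp he with ⟨rfl, -⟩ | ⟨-, rfl⟩
  · exact VertexSeq.mem_verts.mpr ⟨i, by omega, rfl⟩
  · exact VertexSeq.mem_verts.mpr ⟨i + 1, by omega, rfl⟩

lemma pathEdges_eq_edges {q : Fin (p.len + 1) → Fin n} (h : ∀ a, q a = p.vtx a) :
    pathEdges q = p.edges := by
  ext e
  simp only [pathEdges, mem_image, mem_univ, true_and, VertexSeq.mem_edges, h, Fin.val_castSucc,
    Fin.val_succ]
  exact ⟨fun ⟨i, hi⟩ => ⟨i, i.isLt, hi⟩, fun ⟨i, hi, he⟩ => ⟨⟨i, hi⟩, he⟩⟩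

lemma pathVerts_eq_verts {q : Fin (p.len + 1) → Fin n} (h : ∀ a, q a = p.vtx a) :
    pathVerts q = p.verts := by
  ext v
  simp only [pathVerts, mem_image, mem_univ, true_and, VertexSeq.mem_verts, h]
  exact ⟨fun ⟨i, hi⟩ => ⟨i, Nat.lt_succ_iff.mp i.isLt, hi⟩,
    fun ⟨i, hi, hv⟩ => ⟨⟨i, Nat.lt_succ_of_le hi⟩, hv⟩⟩

lemma pathG_eq_graph {q : Fin (p.len + 1) → Fin n} (h : ∀ a, q a = p.vtx a) :
    pathG q = p.graph := by
  rw [pathG, pathEdges_eq_edges h, VertexSeq.graph]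

lemma pathEdges_toFin (p : VertexSeq (Fin n)) : pathEdges p.toFin = p.edges :=
  pathEdges_eq_edges fun _ => rfl

lemma pathVerts_toFin (p : VertexSeq (Fin n)) : pathVerts p.toFin = p.verts :=
  pathVerts_eq_verts fun _ => rfl

namespace VertexSeq

lemma IsPath.edgesF_graph (hp : p.IsPath) : edgesF p.graph = p.edges := by
  ext e
  rw [mem_edgesF, hp.edgeSet_graph, mem_coe]

lemma IsPath.two_le_degF {c : ℕ} (hp : p.IsPath) (hG : p.graph ≤ G) (hc0 : 0 < c)
    (hc : c < p.len) : 2 ≤ degF G (p.vtx c) := by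
  obtain ⟨d, rfl⟩ : ∃ d, c = d + 1 := ⟨c - 1, by omega⟩
  have hne : p.vtx d ≠ p.vtx (d + 2) := fun h => by
    have := hp (show d ∈ Set.Iic p.len by simp only [Set.mem_Iic]; omega)
      (show d + 2 ∈ Set.Iic p.len by simp only [Set.mem_Iic]; omega) h
    omega
  have hprev := hG (hp.graph_adj (c := d) (by omega)).symm
  have hnext := hG (hp.graph_adj (c := d + 1) hc)
  calc 2 = ({p.vtx d, p.vtx (d + 2)} : Finset (Fin n)).card := (card_pair hne).symm
    _ ≤ degF G (p.vtx (d + 1)) := card_le_card (by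
        intro w hw
        rcases mem_insert.mp hw with rfl | hw
        · simpa using hprev
        · rw [mem_singleton.mp hw]; simpa using hnext)

/- The interior of an ear avoids `B ⊇ supp G`, so an edge of `G` on it joins its two endpoints:
the ear is a single edge of `G`. -/
lemma IsEar.graph_le_of_not_disjoint (hear : p.IsEar B) (hGB : supportF G ⊆ B)
    (h : ¬ Disjoint p.edges (edgesF G)) : p.graph ≤ G ∧ p.verts ⊆ B := by
  obtain ⟨e, he, heG⟩ := not_disjoint_iff.mp h
  obtain ⟨i, hi, rfl⟩ := mem_edges.mp he
  rw [mem_edgesF, mem_edgeSet] at heG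
  have hB₁ : p.vtx i ∈ B := hGB (mem_supportF.mpr ⟨_, heG⟩)
  have hB₂ : p.vtx (i + 1) ∈ B := hGB (mem_supportF.mpr ⟨_, heG.symm⟩)
  obtain rfl : i = 0 := by
    by_contra hi0
    exact hear.2.2 i (by omega) hi hB₁
  have hlen : p.len = 1 := by
    by_contra hlen
    exact hear.2.2 1 (by omega) (by omega) hB₂
  refine ⟨fun u v huv => ?_, fun v hv => ?_⟩
  · obtain ⟨j, hj, hjuv⟩ := mem_edges.mp ((fromEdgeSet_adj _).mp huv).1
    obtain rfl : j = 0 := by omega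
    rw [← mem_edgeSet, ← hjuv]
    exact heG
  · obtain ⟨j, hj, rfl⟩ := mem_verts.mp hv
    obtain rfl | rfl : j = 0 ∨ j = 1 := by omega
    exacts [hB₁, hB₂]

end VertexSeq

end Graphs

section Decomposition

variable {n k t : ℕ} {G : SimpleGraph (Fin n)} {B : Finset (Fin n)} {L : VertexSeq (Fin n)}
  {Ls rest : Fin k → VertexSeq (Fin n)} {ps : Fin t → VertexSeq (Fin n)} {a : ℕ}

open VertexSeq
open scoped Function

structure IsEarDecomposition (G : SimpleGraph (Fin n)) (B : Finset (Fin n))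
    (Ls : Fin k → VertexSeq (Fin n)) (ps : Fin t → VertexSeq (Fin n)) : Prop where
  one_le_len : ∀ j, 1 ≤ (ps j).len
  isSegmentOf : ∀ j, ∃ i, (ps j).IsSegmentOf (Ls i)
  isEarSequence : IsEarSequence B ps
  pairwise_disjoint : Pairwise (Disjoint on fun j => (ps j).edges)
  biUnion_edges :
    univ.biUnion (fun j => (ps j).edges) = edgesF (G ⊔ ⨆ i, (Ls i).graph) \ edgesF G
  union_verts :
    B ∪ univ.biUnion (fun j => (ps j).verts) = B ∪ univ.biUnion fun i => (Ls i).verts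

namespace IsEarDecomposition

lemma of_fin_zero (Ls : Fin 0 → VertexSeq (Fin n)) :
    IsEarDecomposition G B Ls (Fin.elim0 : Fin 0 → VertexSeq (Fin n)) where
  one_le_len := nofun
  isSegmentOf := nofun
  isEarSequence := nofun
  pairwise_disjoint := nofun
  biUnion_edges := by simp
  union_verts := by simp

lemma cons_of_len_eq_zero (hL : L.len = 0) (hL₀ : L.vtx 0 ∈ B)
    (D : IsEarDecomposition G B rest ps) : IsEarDecomposition G B (Fin.cons L rest) ps where
  one_le_len := D.one_le_len
  isSegmentOf j := by
    obtain ⟨i, hi⟩ := D.isSegmentOf j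
    exact ⟨i.succ, by simpa using hi⟩
  isEarSequence := D.isEarSequence
  pairwise_disjoint := D.pairwise_disjoint
  biUnion_edges := by
    have : L.graph = ⊥ := by simp [graph, edges, hL]
    simp [D.biUnion_edges, Fin.iSup_succ, this]
  union_verts := by
    have : L.verts = {L.vtx 0} := by simp [verts, hL]
    rw [D.union_verts, Fin.biUnion_univ_succ]
    simp [this, hL₀]

lemma exists_isSegmentOf_cons (ha : a ≤ L.len) {p : VertexSeq (Fin n)}
    (h : ∃ i, p.IsSegmentOf ((Fin.cons (L.drop a) rest : Fin (k + 1) → VertexSeq (Fin n)) i)) :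
    ∃ i, p.IsSegmentOf ((Fin.cons L rest : Fin (k + 1) → VertexSeq (Fin n)) i) := by
  obtain ⟨i, hi⟩ := h
  induction i using Fin.cases with
  | zero => exact ⟨0, hi.trans (drop_isSegmentOf ha)⟩
  | succ i => exact ⟨i.succ, hi⟩

lemma cons_of_graph_take_le (ha : a ≤ L.len) (hG : (L.take a).graph ≤ G)
    (hB : (L.take a).verts ⊆ B) (D : IsEarDecomposition G B (Fin.cons (L.drop a) rest) ps) :
    IsEarDecomposition G B (Fin.cons L rest) ps where
  one_le_len := D.one_le_len
  isSegmentOf j := exists_isSegmentOf_cons ha (D.isSegmentOf j)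
  isEarSequence := D.isEarSequence
  pairwise_disjoint := D.pairwise_disjoint
  biUnion_edges := by
    rw [D.biUnion_edges]
    simp only [Fin.iSup_succ, Fin.cons_zero, Fin.cons_succ, ← graph_take_sup_drop ha]
    simp only [← sup_assoc, sup_of_le_left hG]
  union_verts := by
    rw [D.union_verts]
    simp only [Fin.biUnion_univ_succ, Fin.cons_zero, Fin.cons_succ, ← verts_take_union_drop ha]
    simp only [← union_assoc, union_eq_left.mpr hB]

lemma cons_take (hL : L.IsPath) (ha₀ : 0 < a) (ha : a ≤ L.len) (hear : (L.take a).IsEar B)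
    (hnew : Disjoint (L.take a).edges (edgesF G))
    (D : IsEarDecomposition (G ⊔ (L.take a).graph) (B ∪ (L.take a).verts)
      (Fin.cons (L.drop a) rest) ps) :
    IsEarDecomposition G B (Fin.cons L rest) (Fin.cons (L.take a) ps) := by
  have hTake : edgesF (L.take a).graph = (L.take a).edges :=
    ((take_isSegmentOf ha).isPath hL).edgesF_graph
  refine ⟨Fin.cases ha₀ D.one_le_len,
    Fin.cases ⟨0, take_isSegmentOf ha⟩ fun j => exists_isSegmentOf_cons ha (D.isSegmentOf j),
    isEarSequence_cons.mpr ⟨hear, D.isEarSequence⟩, ?_, ?_, ?_⟩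
  · have hfresh : ∀ j, Disjoint (L.take a).edges (ps j).edges := fun j => by
      have hj := subset_biUnion_of_mem (fun j => (ps j).edges) (mem_univ j)
      rw [D.biUnion_edges] at hj
      exact disjoint_sdiff.mono (by rw [edgesF_sup, hTake]; exact subset_union_right) hj
    refine pairwise_fin_succ_iff.mpr ⟨fun j => (hfresh j).symm, hfresh, fun i j hij => ?_⟩
    simpa [Function.onFun] using D.pairwise_disjoint hij
  · rw [Fin.biUnion_univ_succ]
    simp only [Fin.cons_zero, Fin.cons_succ]
    rw [D.biUnion_edges]
    simp only [Fin.iSup_succ, Fin.cons_zero, Fin.cons_succ, ← graph_take_sup_drop ha, edgesF_sup,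
      hTake]
    ext e
    have : e ∈ (L.take a).edges → e ∉ edgesF G := fun h => disjoint_left.mp hnew h
    simp only [mem_union, mem_sdiff]
    tauto
  · rw [Fin.biUnion_univ_succ]
    simp only [Fin.cons_zero, Fin.cons_succ]
    rw [← union_assoc, D.union_verts]
    simp only [Fin.biUnion_univ_succ, Fin.cons_zero, Fin.cons_succ, ← verts_take_union_drop ha,
      union_assoc]

lemma isPath (D : IsEarDecomposition G B Ls ps) (hLs : ∀ i, (Ls i).IsPath) (j : Fin t) :
    (ps j).IsPath :=
  have ⟨i, hi⟩ := D.isSegmentOf j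
  hi.isPath (hLs i)

lemma verts_inter_union_leavesF (D : IsEarDecomposition G B Ls ps) (hLs : ∀ i, (Ls i).IsPath)
    (j : Fin t) :
    (ps j).verts ∩ (B ∪ (univ.filter fun k => k < j).biUnion (fun k => (ps k).verts)
      ∪ leavesF (G ⊔ ⨆ i, (Ls i).graph)) = {(ps j).vtx 0, (ps j).vtx (ps j).len} := by
  refine (D.isEarSequence j).verts_inter_union fun c hc₀ hc hleaf => ?_
  obtain ⟨i, hi⟩ := D.isSegmentOf j
  obtain ⟨d, hd₀, hd, hcd⟩ := hi.exists_interior hc₀ hc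
  have := (hLs i).two_le_degF (G := G ⊔ ⨆ i, (Ls i).graph)
    (le_sup_of_le_right (le_iSup_of_le i le_rfl)) hd₀ hd
  rw [leavesF, mem_filter, hcd] at hleaf
  omega

lemma card_eq_excess_sub_excess (D : IsEarDecomposition G B Ls ps) (hLs : ∀ i, (Ls i).IsPath) :
    (t : ℤ) = ((edgesF (G ⊔ ⨆ i, (Ls i).graph)).card
        - (B ∪ univ.biUnion fun i => (Ls i).verts).card : ℤ)
      - ((edgesF G).card - B.card : ℤ) := by
  have hE : (edgesF (G ⊔ ⨆ i, (Ls i).graph)).card = (edgesF G).card + ∑ j, (ps j).len := by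
    rw [← card_sdiff_add_card_eq_card (edgesF_sup ▸ subset_union_left), ← D.biUnion_edges,
      card_biUnion (D.pairwise_disjoint.set_pairwise _), add_comm]
    simp only [(D.isPath hLs _).card_edges]
  have hV := D.isEarSequence.card_union_biUnion_verts (D.isPath hLs)
  rw [D.union_verts] at hV
  have hlen : ∑ j, (ps j).len = ∑ j, ((ps j).len - 1) + ∑ _j : Fin t, 1 := by
    rw [← sum_add_distrib]
    exact sum_congr rfl fun j _ => (Nat.sub_add_cancel (D.one_le_len j)).symm
  simp only [sum_const, card_univ, Fintype.card_fin, smul_eq_mul, mul_one] at hlen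
  omega

end IsEarDecomposition

end Decomposition

open VertexSeq in
theorem exists_isEarDecomposition {n k : ℕ} (G : SimpleGraph (Fin n)) (B : Finset (Fin n))
    (hGB : supportF G ⊆ B) (Ls : Fin k → VertexSeq (Fin n)) (hLs : ∀ i, (Ls i).IsPath)
    (hends : ∀ i, (Ls i).vtx 0 ∈ B ∧ (Ls i).vtx (Ls i).len ∈ B) :
    ∃ (t : ℕ) (ps : Fin t → VertexSeq (Fin n)), IsEarDecomposition G B Ls ps := by
  obtain ⟨N, hN⟩ : ∃ N, ∑ i, ((Ls i).len + 1) = N := ⟨_, rfl⟩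
  induction N using Nat.strong_induction_on generalizing k G B with
  | _ N ih =>
  cases k with
  | zero => exact ⟨0, Fin.elim0, .of_fin_zero Ls⟩
  | succ k =>
    obtain ⟨L, rest, rfl⟩ : ∃ L rest, Ls = Fin.cons L rest :=
      ⟨_, _, (Fin.cons_self_tail Ls).symm⟩
    simp only [Fin.forall_fin_succ, Fin.cons_zero, Fin.cons_succ] at hLs hends
    simp only [Fin.sum_univ_succ, Fin.cons_zero, Fin.cons_succ] at hN
    obtain ⟨⟨hL₀, hL⟩, hrest⟩ := hends
    rcases Nat.eq_zero_or_pos L.len with hlen | hpos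
    · obtain ⟨t, ps, D⟩ := ih _ (by omega) G B hGB rest hLs.2 hrest rfl
      exact ⟨t, ps, D.cons_of_len_eq_zero hlen hL₀⟩
    obtain ⟨a, ha₀, ha, hear⟩ := L.exists_take_isEar hL₀ hL hpos
    set Ls' : Fin (k + 1) → VertexSeq (Fin n) := Fin.cons (L.drop a) rest
    have hLs' : ∀ i, (Ls' i).IsPath := by
      simp only [Ls', Fin.forall_fin_succ, Fin.cons_zero, Fin.cons_succ]
      exact ⟨(drop_isSegmentOf ha).isPath hLs.1, hLs.2⟩
    have hends' : ∀ i, (Ls' i).vtx 0 ∈ B ∧ (Ls' i).vtx (Ls' i).len ∈ B := by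
      simp only [Ls', Fin.forall_fin_succ, Fin.cons_zero, Fin.cons_succ]
      exact ⟨⟨hear.2.1, by simpa [drop, Nat.add_sub_cancel' ha] using hL⟩, hrest⟩
    have hlt : ∑ i, ((Ls' i).len + 1) < N := by
      simp only [Ls', Fin.sum_univ_succ, Fin.cons_zero, Fin.cons_succ, drop]
      omega
    by_cases hnew : Disjoint (L.take a).edges (edgesF G)
    · have hGB' : supportF (G ⊔ (L.take a).graph) ⊆ B ∪ (L.take a).verts := by
        rw [supportF_sup]
        exact union_subset_union hGB (supportF_graph_subset _)
      obtain ⟨t, ps, D⟩ := ih _ hlt _ _ hGB' _ hLs'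
        (fun i => ⟨mem_union_left _ (hends' i).1, mem_union_left _ (hends' i).2⟩) rfl
      exact ⟨t + 1, _, D.cons_take hLs.1 ha₀ ha hear hnew⟩
    · obtain ⟨hG, hB⟩ := hear.graph_le_of_not_disjoint hGB hnew
      obtain ⟨t, ps, D⟩ := ih _ hlt G B hGB _ hLs' hends' rfl
      exact ⟨t, ps, D.cons_of_graph_take_le ha hG hB⟩

open VertexSeq in
theorem decompose_H_plus_paths_general
    (n M k : ℕ)
    (H : SimpleGraph (Fin n)) (VH : Finset (Fin n))
    (hVH : supportF H ⊆ VH)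
    (len : Fin k → ℕ) (hlen : ∀ i, 1 ≤ len i ∧ len i ≤ M)
    (q : ∀ i : Fin k, Fin (len i + 1) → Fin n)
    (hinj : ∀ i, Function.Injective (q i))
    (hend : ∀ i, q i 0 ∈ VH ∧ q i (Fin.last (len i)) ∈ VH) :
    ∃ (t : ℕ) (plen : Fin t → ℕ) (P : ∀ j : Fin t, Fin (plen j + 1) → Fin n),
      -- the paths are self-avoiding, of length between 1 and M
      (∀ j, 1 ≤ plen j ∧ plen j ≤ M) ∧
      (∀ j, Function.Injective (P j)) ∧
      -- their edge sets decompose E(S) ∖ E(H)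
      (∀ j j', j ≠ j' → Disjoint (pathEdges (P j)) (pathEdges (P j'))) ∧
      (Finset.univ.biUnion (fun j => pathEdges (P j))
        = edgesF (H ⊔ (⨆ i, pathG (q i))) \ edgesF H) ∧
      -- (1): the vertex-intersection condition
      (∀ j : Fin t,
        pathVerts (P j) ∩
            (VH ∪ (Finset.univ.filter (fun k' => k' < j)).biUnion
              (fun k' => pathVerts (P k')) ∪ leavesF (H ⊔ (⨆ i, pathG (q i))))
          = {P j 0, P j (Fin.last (plen j))}) ∧
      -- (3): t = τ(S) − τ(H), with vertex sets VH resp. VH ∪ (path vertices)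
      ((t : ℤ) =
        (((edgesF (H ⊔ (⨆ i, pathG (q i)))).card : ℤ) -
            ((VH ∪ Finset.univ.biUnion (fun i => pathVerts (q i))).card : ℤ)) -
          (((edgesF H).card : ℤ) - (VH.card : ℤ))) := by
  set Ls : Fin k → VertexSeq (Fin n) := fun i => ofFin (q i)
  have hq : ∀ i a, q i a = (Ls i).vtx a := fun i a =>
    (ofFin_vtx (q i) (Nat.lt_succ_iff.mp a.isLt)).symm
  have hLs : ∀ i, (Ls i).IsPath := fun i => isPath_ofFin (hinj i)
  have hS : H ⊔ ⨆ i, pathG (q i) = H ⊔ ⨆ i, (Ls i).graph :=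
    congrArg (H ⊔ ·) (iSup_congr fun i => pathG_eq_graph (p := Ls i) (hq i))
  have hV : ∀ i, pathVerts (q i) = (Ls i).verts := fun i => pathVerts_eq_verts (p := Ls i) (hq i)
  have hends : ∀ i, (Ls i).vtx 0 ∈ VH ∧ (Ls i).vtx (Ls i).len ∈ VH := fun i => by
    have := hend i
    rwa [hq, hq, Fin.val_zero, Fin.val_last] at this
  obtain ⟨t, ps, D⟩ := exists_isEarDecomposition H VH hVH Ls hLs hends
  refine ⟨t, fun j => (ps j).len, fun j => (ps j).toFin, fun j => ⟨D.one_le_len j, ?_⟩,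
    fun j => (D.isPath hLs j).injective_toFin, ?_, ?_, fun j => ?_, ?_⟩
  · obtain ⟨i, hi⟩ := D.isSegmentOf j
    exact hi.len_le.trans (hlen i).2
  · exact fun j j' h => by simpa only [pathEdges_toFin] using D.pairwise_disjoint h
  · simpa only [pathEdges_toFin, hS] using D.biUnion_edges
  · simpa only [pathVerts_toFin, hS, toFin_zero, toFin_last] using
      D.verts_inter_union_leavesF hLs j
  · simpa only [hS, hV] using D.card_eq_excess_sub_excess hLs

/-- **Statement 18** (Lemma A.3 of the paper; decomposition of `H` plus
self-avoiding paths).  Let `H` be a graph with vertex set `VH ⊆ [n]`, and let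
`L₁, …, L_k` be self-avoiding paths, each of length between `1` and `M`, with
endpoints in `VH`.  Set `S = H ∪ L₁ ∪ ⋯ ∪ L_k`.  Then `E(S) ∖ E(H)` can be
decomposed into `t` self-avoiding paths `P₁, …, P_t` such that:
(1) `V(P_j) ∩ (VH ∪ ⋃_{k' < j} V(P_{k'}) ∪ 𝓛(S)) = EndP(P_j)` for all `j`;
(2) `|E(P_j)| ≤ M` for all `j`; and
(3) `t = τ(S) − τ(H)`, where `τ` denotes the excess `|E| − |V|`. -/
theorem decompose_H_plus_paths
    (n M k : ℕ) (hM : 1 ≤ M)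
    (H : SimpleGraph (Fin n)) (VH : Finset (Fin n))
    (hVH : supportF H ⊆ VH)
    (len : Fin k → ℕ) (hlen : ∀ i, 1 ≤ len i ∧ len i ≤ M)
    (q : ∀ i : Fin k, Fin (len i + 1) → Fin n)
    (hinj : ∀ i, Function.Injective (q i))
    (hend : ∀ i, q i 0 ∈ VH ∧ q i (Fin.last (len i)) ∈ VH) :
    ∃ (t : ℕ) (plen : Fin t → ℕ) (P : ∀ j : Fin t, Fin (plen j + 1) → Fin n),
      -- the paths are self-avoiding, of length between 1 and M
      (∀ j, 1 ≤ plen j ∧ plen j ≤ M) ∧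
      (∀ j, Function.Injective (P j)) ∧
      -- their edge sets decompose E(S) ∖ E(H)
      (∀ j j', j ≠ j' → Disjoint (pathEdges (P j)) (pathEdges (P j'))) ∧
      (Finset.univ.biUnion (fun j => pathEdges (P j))
        = edgesF (H ⊔ (⨆ i, pathG (q i))) \ edgesF H) ∧
      -- (1): the vertex-intersection condition
      (∀ j : Fin t,
        pathVerts (P j) ∩
            (VH ∪ (Finset.univ.filter (fun k' => k' < j)).biUnion
              (fun k' => pathVerts (P k')) ∪ leavesF (H ⊔ (⨆ i, pathG (q i))))
          = {P j 0, P j (Fin.last (plen j))}) ∧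
      -- (3): t = τ(S) − τ(H), with vertex sets VH resp. VH ∪ (path vertices)
      ((t : ℤ) =
        (((edgesF (H ⊔ (⨆ i, pathG (q i)))).card : ℤ) -
            ((VH ∪ Finset.univ.biUnion (fun i => pathVerts (q i))).card : ℤ)) -
          (((edgesF H).card : ℤ) - (VH.card : ℤ))) :=
  decompose_H_plus_paths_general n M k H VH hVH len hlen q hinj hend

end
end
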